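/- arXiv:math/9903025 — 3 statements merged into one kernel-verified Lean document; each statement's English description precedes it below -/
import Mathlib

section
/- Under urban renewal, the weighted sum of perfect matchings of the 'before' graph equals twice the weighted sum of perfect matchings of the 'after' graph. Concretely: let H be a graph containing a 4-cycle (square) on vertices a, b, c, d, each of weight-1 edges, such that the only edges connecting {a,b,c,d} to the rest of H are four pendant edges of weight 1 from a, b, c, d to vertices a', b', c', d' respectively. Let H' be the graph obtained by contracting each pendant edge (identifying a with a', etc.) and changing each of the four square edges to weight 1/2. Then the weighted matching polynomial sum of H equals 2 times that of H'. -/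
open scoped Classical

/-- A perfect matching of the complete weighted graph on a finite vertex type `V`:
a set of non-loop unordered pairs covering every vertex exactly once. -/
def IsPerfectPairing {V : Type} (M : Finset (Sym2 V)) : Prop :=
  (∀ p ∈ M, ¬ p.IsDiag) ∧ ∀ v : V, ∃! p : Sym2 V, p ∈ M ∧ v ∈ p

/-- The weighted sum of perfect matchings: the sum, over all perfect matchings,
of the product of the edge weights of the matching.  (Non-edges are encoded by
weight `0`.) -/
noncomputable def matchSum {V : Type} [Fintype V] (w : Sym2 V → ℝ) : ℝ :=
  ∑ M : {M : Finset (Sym2 V) // IsPerfectPairing M}, ∏ p ∈ M.1, w p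

namespace UR

set_option linter.unusedSectionVars false

variable {V : Type}

lemma pp_mem_ne {M : Finset (Sym2 V)} (hM : IsPerfectPairing M) {a b : V}
    (h : s(a, b) ∈ M) : a ≠ b := fun hab => hM.1 _ h (by simp [hab])

lemma pp_uniq {M : Finset (Sym2 V)} (hM : IsPerfectPairing M) {a b c : V}
    (h1 : s(a, b) ∈ M) (h2 : s(a, c) ∈ M) : b = c := by
  obtain ⟨q, hq, huq⟩ := hM.2 a
  have e1 := huq _ ⟨h1, by simp⟩
  have e2 := huq _ ⟨h2, by simp⟩
  exact Sym2.congr_right.1 (e1.trans e2.symm)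

lemma pp_partner {M : Finset (Sym2 V)} (hM : IsPerfectPairing M) (v : V) :
    ∃ u, s(v, u) ∈ M := by
  obtain ⟨q, ⟨hq, hv⟩, _⟩ := hM.2 v
  obtain ⟨u, rfl⟩ := Sym2.mem_iff_exists.1 hv
  exact ⟨u, hq⟩

lemma pp_pair_uniq {M : Finset (Sym2 V)} (hM : IsPerfectPairing M) {q q' : Sym2 V} {v : V}
    (hq : q ∈ M) (hq' : q' ∈ M) (hv : v ∈ q) (hv' : v ∈ q') : q = q' := by
  obtain ⟨r, hr, hur⟩ := hM.2 v
  rw [hur q ⟨hq, hv⟩, hur q' ⟨hq', hv'⟩]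

section Split

variable [Fintype V] (w : Sym2 V → ℝ) (F : Finset (Sym2 V)) (T : V → Prop)
variable [DecidableEq (Sym2 V)] [DecidablePred T]

noncomputable def down (M : Finset (Sym2 V)) : Finset (Sym2 {v : V // ¬ T v}) :=
  Finset.univ.filter (fun q => q.map Subtype.val ∈ M)

variable {F T}

lemma covered {q : Sym2 V} (hT : ∀ v, T v ↔ ∃ q ∈ F, v ∈ q) (hq : q ∈ F) :
    ∀ v ∈ q, T v := fun v hv => (hT v).2 ⟨q, hq, hv⟩

lemma map_val_not_covered (r : Sym2 {v : V // ¬ T v}) :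
    ∀ v ∈ r.map Subtype.val, ¬ T v := by
  intro v hv
  obtain ⟨a, _, rfl⟩ := Sym2.mem_map.1 hv
  exact a.2

lemma not_in_F_avoids {M : Finset (Sym2 V)} (hM : IsPerfectPairing M)
    (hT : ∀ v, T v ↔ ∃ q ∈ F, v ∈ q) (hFM : F ⊆ M) {q : Sym2 V} (hq : q ∈ M)
    (hqF : q ∉ F) : ∀ v ∈ q, ¬ T v := by
  intro v hv hTv
  obtain ⟨q', hq', hv'⟩ := (hT v).1 hTv
  exact hqF ((pp_pair_uniq hM hq (hFM hq') hv hv') ▸ hq')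

lemma down_pp {M : Finset (Sym2 V)} (hM : IsPerfectPairing M)
    (hT : ∀ v, T v ↔ ∃ q ∈ F, v ∈ q) (hFM : F ⊆ M) :
    IsPerfectPairing (down T M) := by
  constructor
  · intro q hq
    have hqM : q.map Subtype.val ∈ M := (Finset.mem_filter.1 hq).2
    have := hM.1 _ hqM
    rwa [Sym2.isDiag_map Subtype.val_injective] at this
  · rintro ⟨v, hv⟩
    obtain ⟨q0, ⟨hq0, hvq0⟩, _⟩ := hM.2 v
    have hq0F : q0 ∉ F := fun h => hv (covered hT h v hvq0)
    obtain ⟨u, rfl⟩ := Sym2.mem_iff_exists.1 hvq0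
    have hu : ¬ T u := not_in_F_avoids hM hT hFM hq0 hq0F u (by simp)
    refine ⟨s(⟨v, hv⟩, ⟨u, hu⟩), ⟨?_, by simp⟩, ?_⟩
    · simp only [down, Finset.mem_filter, Finset.mem_univ, true_and, Sym2.map_pair_eq]
      exact hq0
    · rintro q' ⟨hq', hvq'⟩
      have h1 : q'.map Subtype.val ∈ M := (Finset.mem_filter.1 hq').2
      have h2 : v ∈ q'.map Subtype.val := Sym2.mem_map.2 ⟨⟨v, hv⟩, hvq', rfl⟩
      have := pp_pair_uniq hM h1 hq0 h2 hvq0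
      apply Sym2.map.injective Subtype.val_injective
      rw [this, Sym2.map_pair_eq]

variable (T) in
noncomputable def up (N : Finset (Sym2 {v : V // ¬ T v})) : Finset (Sym2 V) :=
  F ∪ N.image (Sym2.map Subtype.val)

lemma up_pp (hnd : ∀ q ∈ F, ¬ q.IsDiag)
    (hdisj : ∀ q ∈ F, ∀ q' ∈ F, ∀ v : V, v ∈ q → v ∈ q' → q = q')
    (hT : ∀ v, T v ↔ ∃ q ∈ F, v ∈ q)
    {N : Finset (Sym2 {v : V // ¬ T v})} (hN : IsPerfectPairing N) :
    IsPerfectPairing (up (F := F) T N) := by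
  constructor
  · intro q hq
    rcases Finset.mem_union.1 hq with h | h
    · exact hnd q h
    · obtain ⟨r, hr, rfl⟩ := Finset.mem_image.1 h
      have := hN.1 r hr
      rwa [Sym2.isDiag_map Subtype.val_injective]
  · intro v
    by_cases hv : T v
    · obtain ⟨q, hq, hvq⟩ := (hT v).1 hv
      refine ⟨q, ⟨Finset.mem_union.2 (Or.inl hq), hvq⟩, ?_⟩
      rintro q' ⟨hq', hvq'⟩
      rcases Finset.mem_union.1 hq' with h | h
      · exact hdisj q' h q hq v hvq' hvq
      · obtain ⟨r, hr, rfl⟩ := Finset.mem_image.1 h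
        exact absurd hv (map_val_not_covered r v hvq')
    · obtain ⟨r, ⟨hr, hvr⟩, hur⟩ := hN.2 ⟨v, hv⟩
      refine ⟨r.map Subtype.val, ⟨Finset.mem_union.2 (Or.inr (Finset.mem_image.2 ⟨r, hr, rfl⟩)),
        Sym2.mem_map.2 ⟨⟨v, hv⟩, hvr, rfl⟩⟩, ?_⟩
      rintro q' ⟨hq', hvq'⟩
      rcases Finset.mem_union.1 hq' with h | h
      · exact absurd (covered hT h v hvq') hv
      · obtain ⟨r', hr', rfl⟩ := Finset.mem_image.1 h
        obtain ⟨a, har', hav⟩ := Sym2.mem_map.1 hvq'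
        have ha : a = ⟨v, hv⟩ := Subtype.ext hav
        rw [hur r' ⟨hr', ha ▸ har'⟩]

lemma image_down {M : Finset (Sym2 V)} (hM : IsPerfectPairing M)
    (hT : ∀ v, T v ↔ ∃ q ∈ F, v ∈ q) (hFM : F ⊆ M) :
    (down T M).image (Sym2.map Subtype.val) = M \ F := by
  ext q
  simp only [Finset.mem_image, Finset.mem_sdiff, down, Finset.mem_filter, Finset.mem_univ,
    true_and]
  constructor
  · rintro ⟨r, hr, rfl⟩
    refine ⟨hr, fun hF => ?_⟩
    induction r using Sym2.ind with
    | _ a b =>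
      exact a.2 (covered hT hF a.1 (by rw [Sym2.map_pair_eq]; simp))
  · rintro ⟨hqM, hqF⟩
    have hav := not_in_F_avoids hM hT hFM hqM hqF
    induction q using Sym2.ind with
    | _ a b =>
      refine ⟨s(⟨a, hav a (by simp)⟩, ⟨b, hav b (by simp)⟩), ?_, by rw [Sym2.map_pair_eq]⟩
      rw [Sym2.map_pair_eq]; exact hqM

lemma sum_split (hnd : ∀ q ∈ F, ¬ q.IsDiag)
    (hdisj : ∀ q ∈ F, ∀ q' ∈ F, ∀ v : V, v ∈ q → v ∈ q' → q = q')
    (hT : ∀ v, T v ↔ ∃ q ∈ F, v ∈ q) :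
    ∑ M : {M : Finset (Sym2 V) // IsPerfectPairing M},
      (if F ⊆ M.1 then ∏ q ∈ M.1 \ F, w q else 0)
    = matchSum (fun q : Sym2 {v : V // ¬ T v} => w (q.map Subtype.val)) := by
  rw [matchSum, ← Finset.sum_filter]
  refine Finset.sum_bij'
    (i := fun M hM => (⟨down T M.1, down_pp M.2 hT (Finset.mem_filter.1 hM).2⟩ :
      {N : Finset (Sym2 {v : V // ¬ T v}) // IsPerfectPairing N}))
    (j := fun N _ => ⟨up (F := F) T N.1, up_pp hnd hdisj hT N.2⟩) ?_ ?_ ?_ ?_ ?_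
  · intros; exact Finset.mem_univ _
  · intro N _
    simp only [Finset.mem_filter, Finset.mem_univ, true_and]
    exact Finset.subset_union_left
  · rintro ⟨M, hM⟩ hMf
    have hFM : F ⊆ M := (Finset.mem_filter.1 hMf).2
    apply Subtype.ext
    show up (F := F) T (down T M) = M
    rw [up, image_down hM hT hFM]
    exact Finset.union_sdiff_of_subset hFM
  · rintro ⟨N, hN⟩ _
    apply Subtype.ext
    show down T (up (F := F) T N) = N
    ext r
    simp only [down, Finset.mem_filter, Finset.mem_univ, true_and, up, Finset.mem_union]
    constructor
    · rintro (h | h)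
      · exfalso
        induction r using Sym2.ind with
        | _ a b => exact a.2 (covered hT h a.1 (by rw [Sym2.map_pair_eq]; simp))
      · obtain ⟨r', hr', hrr⟩ := Finset.mem_image.1 h
        rwa [← Sym2.map.injective Subtype.val_injective hrr]
    · intro hr
      exact Or.inr (Finset.mem_image.2 ⟨r, hr, rfl⟩)
  · rintro ⟨M, hM⟩ hMf
    have hFM : F ⊆ M := (Finset.mem_filter.1 hMf).2
    rw [← image_down hM hT hFM, Finset.prod_image
      (fun a _ b _ h => Sym2.map.injective Subtype.val_injective h)]

end Split

section Equiv

lemma pp_image {V1 V2 : Type} (e : V1 ≃ V2) {M : Finset (Sym2 V1)}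
    (hM : IsPerfectPairing M) : IsPerfectPairing (M.image (Sym2.map e)) := by
  constructor
  · intro q hq
    obtain ⟨r, hr, rfl⟩ := Finset.mem_image.1 hq
    rw [Sym2.isDiag_map e.injective]
    exact hM.1 r hr
  · intro v
    obtain ⟨r, ⟨hr, hvr⟩, hur⟩ := hM.2 (e.symm v)
    refine ⟨r.map e, ⟨Finset.mem_image.2 ⟨r, hr, rfl⟩,
      Sym2.mem_map.2 ⟨e.symm v, hvr, e.apply_symm_apply v⟩⟩, ?_⟩
    rintro q' ⟨hq', hvq'⟩
    obtain ⟨r', hr', rfl⟩ := Finset.mem_image.1 hq'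
    obtain ⟨a, har', hav⟩ := Sym2.mem_map.1 hvq'
    have : a = e.symm v := by rw [← hav, e.symm_apply_apply]
    rw [hur r' ⟨hr', this ▸ har'⟩]

lemma image_image_symm {V1 V2 : Type} (e : V1 ≃ V2) (M : Finset (Sym2 V1)) :
    (M.image (Sym2.map e)).image (Sym2.map e.symm) = M := by
  rw [Finset.image_image]
  have : Sym2.map (e.symm : V2 → V1) ∘ Sym2.map e = id := by
    funext q
    simp [Sym2.map_map, Function.comp]
  rw [this, Finset.image_id]

lemma matchSum_equiv {V1 V2 : Type} [Fintype V1] [Fintype V2] (e : V1 ≃ V2)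
    (w : Sym2 V2 → ℝ) :
    matchSum (fun q => w (q.map e)) = matchSum w := by
  rw [matchSum, matchSum]
  refine Finset.sum_nbij'
    (i := fun M => (⟨M.1.image (Sym2.map e), pp_image e M.2⟩ :
      {N : Finset (Sym2 V2) // IsPerfectPairing N}))
    (j := fun N => (⟨N.1.image (Sym2.map e.symm), pp_image e.symm N.2⟩ :
      {N : Finset (Sym2 V1) // IsPerfectPairing N}))
    (fun _ _ => Finset.mem_univ _) (fun _ _ => Finset.mem_univ _) ?_ ?_ ?_
  · intro M _
    exact Subtype.ext (image_image_symm e M.1)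
  · intro N _
    apply Subtype.ext
    show (N.1.image (Sym2.map e.symm)).image (Sym2.map e) = N.1
    have := image_image_symm e.symm N.1
    rwa [e.symm_symm] at this
  · intro M _
    rw [Finset.prod_image (fun a _ b _ h => Sym2.map.injective e.injective h)]

end Equiv

section Before

variable {W : Type}

noncomputable def FA : Finset (Sym2 (Fin 4 ⊕ W)) :=
  {s(Sum.inl 0, Sum.inl 1), s(Sum.inl 2, Sum.inl 3)}
noncomputable def FB : Finset (Sym2 (Fin 4 ⊕ W)) :=
  {s(Sum.inl 0, Sum.inl 3), s(Sum.inl 1, Sum.inl 2)}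
noncomputable def FC (p : Fin 4 → W) : Finset (Sym2 (Fin 4 ⊕ W)) :=
  {s(Sum.inl 0, Sum.inl 1), s(Sum.inl 2, Sum.inr (p 2)), s(Sum.inl 3, Sum.inr (p 3))}
noncomputable def FD (p : Fin 4 → W) : Finset (Sym2 (Fin 4 ⊕ W)) :=
  {s(Sum.inl 0, Sum.inl 3), s(Sum.inl 1, Sum.inr (p 1)), s(Sum.inl 2, Sum.inr (p 2))}
noncomputable def FE (p : Fin 4 → W) : Finset (Sym2 (Fin 4 ⊕ W)) :=
  {s(Sum.inl 1, Sum.inl 2), s(Sum.inl 0, Sum.inr (p 0)), s(Sum.inl 3, Sum.inr (p 3))}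
noncomputable def FF (p : Fin 4 → W) : Finset (Sym2 (Fin 4 ⊕ W)) :=
  {s(Sum.inl 2, Sum.inl 3), s(Sum.inl 0, Sum.inr (p 0)), s(Sum.inl 1, Sum.inr (p 1))}
noncomputable def FG (p : Fin 4 → W) : Finset (Sym2 (Fin 4 ⊕ W)) :=
  {s(Sum.inl 0, Sum.inr (p 0)), s(Sum.inl 1, Sum.inr (p 1)), s(Sum.inl 2, Sum.inr (p 2)),
    s(Sum.inl 3, Sum.inr (p 3))}

variable (p : Fin 4 → W) (wB : Sym2 (Fin 4 ⊕ W) → ℝ)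

lemma nosub {M : Finset (Sym2 (Fin 4 ⊕ W))} (hM : IsPerfectPairing M)
    {a b : Fin 4 ⊕ W} (c : Fin 4 ⊕ W) {F : Finset (Sym2 (Fin 4 ⊕ W))}
    (hmem : s(a, c) ∈ F) (hab : s(a, b) ∈ M) (hbc : b ≠ c) : ¬ F ⊆ M :=
  fun h => hbc (pp_uniq hM hab (h hmem))

variable (hdiag1 : wB s(Sum.inl 0, Sum.inl 2) = 0)
  (hdiag2 : wB s(Sum.inl 1, Sum.inl 3) = 0)
  (hnopend : ∀ (i : Fin 4) (v : W), v ≠ p i → wB s(Sum.inl i, Sum.inr v) = 0)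

include hdiag1 hdiag2 hnopend in
lemma mem3 {M : Finset (Sym2 (Fin 4 ⊕ W))} (hM : IsPerfectPairing M)
    (i : Fin 4) {u : Fin 4 ⊕ W} (hu : s(Sum.inl i, u) ∈ M)
    (hw : wB s(Sum.inl i, u) ≠ 0) :
    u = Sum.inl (i + 1) ∨ u = Sum.inl (i + 3) ∨ u = Sum.inr (p i) := by
  have hdiagAll : ∀ i : Fin 4, wB s(Sum.inl i, Sum.inl (i + 2)) = 0 := by
    intro i
    fin_cases i
    · exact hdiag1
    · exact hdiag2
    · show wB s(Sum.inl 2, Sum.inl 0) = 0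
      rwa [Sym2.eq_swap]
    · show wB s(Sum.inl 3, Sum.inl 1) = 0
      rwa [Sym2.eq_swap]
  match u with
  | Sum.inr v =>
    right; right
    by_contra hv
    exact hw (hnopend i v (fun h => hv (by rw [h])))
  | Sum.inl j =>
    have hji : j ≠ i := fun h => pp_mem_ne hM hu (by rw [h])
    have hji2 : j ≠ i + 2 := by
      intro h
      exact hw (h ▸ hdiagAll i)
    have : ∀ i j : Fin 4, j ≠ i → j ≠ i + 2 → j = i + 1 ∨ j = i + 3 := by decide
    rcases this i j hji hji2 with h | h
    · exact Or.inl (by rw [h])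
    · exact Or.inr (Or.inl (by rw [h]))

include hdiag1 hdiag2 hnopend in
lemma key_before {M : Finset (Sym2 (Fin 4 ⊕ W))} (hM : IsPerfectPairing M) :
    ∏ q ∈ M, wB q =
      (if FA ⊆ M then ∏ q ∈ M, wB q else 0)
      + (if FB ⊆ M then ∏ q ∈ M, wB q else 0)
      + (if FC p ⊆ M then ∏ q ∈ M, wB q else 0)
      + (if FD p ⊆ M then ∏ q ∈ M, wB q else 0)
      + (if FE p ⊆ M then ∏ q ∈ M, wB q else 0)
      + (if FF p ⊆ M then ∏ q ∈ M, wB q else 0)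
      + (if FG p ⊆ M then ∏ q ∈ M, wB q else 0) := by
  by_cases hz : ∏ q ∈ M, wB q = 0
  · rw [hz]; simp
  · have hnz : ∀ {q : Sym2 (Fin 4 ⊕ W)}, q ∈ M → wB q ≠ 0 :=
      fun hq hwq => hz (Finset.prod_eq_zero hq hwq)
    obtain ⟨u0, hu0⟩ := pp_partner hM (Sum.inl 0)
    rcases mem3 p wB hdiag1 hdiag2 hnopend hM 0 hu0 (hnz hu0) with h | h | h <;>
      (try norm_num at h) <;> subst h
    · -- u0 = inl 1
      have h0' : s(Sum.inl 1, Sum.inl 0) ∈ M := by rwa [Sym2.eq_swap]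
      obtain ⟨u2, hu2⟩ := pp_partner hM (Sum.inl 2)
      rcases mem3 p wB hdiag1 hdiag2 hnopend hM 2 hu2 (hnz hu2) with h | h | h <;>
        (try norm_num at h) <;> subst h
      · -- config A
        have hP : FA ⊆ M := by
          rw [show (2 : Fin 4) + 1 = 3 by decide] at hu2
          simp [FA, Finset.insert_subset_iff, hu0, hu2]
        have hNB : ¬ (FB ⊆ M) := nosub hM (Sum.inl 3) (by simp [FB]) hu0 (by simp)
        have hNC : ¬ (FC p ⊆ M) := nosub hM (Sum.inr (p 2)) (by simp [FC]) hu2 (by simp)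
        have hND : ¬ (FD p ⊆ M) := nosub hM (Sum.inl 3) (by simp [FD]) hu0 (by simp)
        have hNE : ¬ (FE p ⊆ M) := nosub hM (Sum.inr (p 0)) (by simp [FE]) hu0 (by simp)
        have hNF : ¬ (FF p ⊆ M) := nosub hM (Sum.inr (p 0)) (by simp [FF]) hu0 (by simp)
        have hNG : ¬ (FG p ⊆ M) := nosub hM (Sum.inr (p 0)) (by simp [FG]) hu0 (by simp)
        rw [if_pos hP, if_neg hNB, if_neg hNC, if_neg hND, if_neg hNE, if_neg hNF, if_neg hNG]
        ring
      · -- u2 = inl 1 : impossible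
        have h2' : s(Sum.inl 1, Sum.inl 2) ∈ M := by rwa [Sym2.eq_swap]
        have := pp_uniq hM h2' h0'
        simp at this
      · -- u2 = inr p 2
        obtain ⟨u3, hu3⟩ := pp_partner hM (Sum.inl 3)
        rcases mem3 p wB hdiag1 hdiag2 hnopend hM 3 hu3 (hnz hu3) with h | h | h <;>
          (try norm_num at h) <;> subst h
        · have h3' : s(Sum.inl 0, Sum.inl 3) ∈ M := by rwa [Sym2.eq_swap]
          have := pp_uniq hM hu0 h3'
          simp at this
        · have h3' : s(Sum.inl 2, Sum.inl 3) ∈ M := by rwa [Sym2.eq_swap]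
          have := pp_uniq hM hu2 h3'
          simp at this
        · -- config C
          have hP : FC p ⊆ M := by
            simp [FC, Finset.insert_subset_iff, hu0, hu2, hu3]
          have hNA : ¬ (FA ⊆ M) := nosub hM (Sum.inl 3) (by simp [FA]) hu2 (by simp)
          have hNB : ¬ (FB ⊆ M) := nosub hM (Sum.inl 3) (by simp [FB]) hu0 (by simp)
          have hND : ¬ (FD p ⊆ M) := nosub hM (Sum.inl 3) (by simp [FD]) hu0 (by simp)
          have hNE : ¬ (FE p ⊆ M) := nosub hM (Sum.inr (p 0)) (by simp [FE]) hu0 (by simp)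
          have hNF : ¬ (FF p ⊆ M) := nosub hM (Sum.inr (p 0)) (by simp [FF]) hu0 (by simp)
          have hNG : ¬ (FG p ⊆ M) := nosub hM (Sum.inr (p 0)) (by simp [FG]) hu0 (by simp)
          rw [if_neg hNA, if_neg hNB, if_pos hP, if_neg hND, if_neg hNE, if_neg hNF, if_neg hNG]
          ring
    · -- u0 = inl 3
      have h0' : s(Sum.inl 3, Sum.inl 0) ∈ M := by rwa [Sym2.eq_swap]
      obtain ⟨u1, hu1⟩ := pp_partner hM (Sum.inl 1)
      rcases mem3 p wB hdiag1 hdiag2 hnopend hM 1 hu1 (hnz hu1) with h | h | h <;>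
        (try norm_num at h) <;> subst h
      · -- config B
        have hP : FB ⊆ M := by
          rw [show (1 : Fin 4) + 1 = 2 by decide] at hu1
          simp [FB, Finset.insert_subset_iff, hu0, hu1]
        have hNA : ¬ (FA ⊆ M) := nosub hM (Sum.inl 1) (by simp [FA]) hu0 (by simp)
        have hNC : ¬ (FC p ⊆ M) := nosub hM (Sum.inl 1) (by simp [FC]) hu0 (by simp)
        have hND : ¬ (FD p ⊆ M) := nosub hM (Sum.inr (p 1)) (by simp [FD]) hu1 (by simp)
        have hNE : ¬ (FE p ⊆ M) := nosub hM (Sum.inr (p 0)) (by simp [FE]) hu0 (by simp)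
        have hNF : ¬ (FF p ⊆ M) := nosub hM (Sum.inr (p 0)) (by simp [FF]) hu0 (by simp)
        have hNG : ¬ (FG p ⊆ M) := nosub hM (Sum.inr (p 0)) (by simp [FG]) hu0 (by simp)
        rw [if_neg hNA, if_pos hP, if_neg hNC, if_neg hND, if_neg hNE, if_neg hNF, if_neg hNG]
        ring
      · -- u1 = inl 0 : impossible
        have h1' : s(Sum.inl 0, Sum.inl 1) ∈ M := by rwa [Sym2.eq_swap]
        have := pp_uniq hM h1' hu0
        simp at this
      · -- u1 = inr p 1
        obtain ⟨u2, hu2⟩ := pp_partner hM (Sum.inl 2)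
        rcases mem3 p wB hdiag1 hdiag2 hnopend hM 2 hu2 (hnz hu2) with h | h | h <;>
          (try norm_num at h) <;> subst h
        · have h2' : s(Sum.inl 3, Sum.inl 2) ∈ M := by rwa [Sym2.eq_swap]
          have := pp_uniq hM h0' h2'
          simp at this
        · have h2' : s(Sum.inl 1, Sum.inl 2) ∈ M := by rwa [Sym2.eq_swap]
          have := pp_uniq hM hu1 h2'
          simp at this
        · -- config D
          have hP : FD p ⊆ M := by
            simp [FD, Finset.insert_subset_iff, hu0, hu1, hu2]
          have hNA : ¬ (FA ⊆ M) := nosub hM (Sum.inl 1) (by simp [FA]) hu0 (by simp)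
          have hNB : ¬ (FB ⊆ M) := nosub hM (Sum.inl 2) (by simp [FB]) hu1 (by simp)
          have hNC : ¬ (FC p ⊆ M) := nosub hM (Sum.inl 1) (by simp [FC]) hu0 (by simp)
          have hNE : ¬ (FE p ⊆ M) := nosub hM (Sum.inr (p 0)) (by simp [FE]) hu0 (by simp)
          have hNF : ¬ (FF p ⊆ M) := nosub hM (Sum.inr (p 0)) (by simp [FF]) hu0 (by simp)
          have hNG : ¬ (FG p ⊆ M) := nosub hM (Sum.inr (p 0)) (by simp [FG]) hu0 (by simp)
          rw [if_neg hNA, if_neg hNB, if_neg hNC, if_pos hP, if_neg hNE, if_neg hNF, if_neg hNG]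
          ring
    · -- u0 = inr p 0
      obtain ⟨u1, hu1⟩ := pp_partner hM (Sum.inl 1)
      rcases mem3 p wB hdiag1 hdiag2 hnopend hM 1 hu1 (hnz hu1) with h | h | h <;>
        (try norm_num at h) <;> subst h
      · -- u1 = inl 2
        have h1' : s(Sum.inl 2, Sum.inl 1) ∈ M := by rwa [Sym2.eq_swap]
        obtain ⟨u3, hu3⟩ := pp_partner hM (Sum.inl 3)
        rcases mem3 p wB hdiag1 hdiag2 hnopend hM 3 hu3 (hnz hu3) with h | h | h <;>
          (try norm_num at h) <;> subst h
        · have h3' : s(Sum.inl 0, Sum.inl 3) ∈ M := by rwa [Sym2.eq_swap]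
          have := pp_uniq hM hu0 h3'
          simp at this
        · have h3' : s(Sum.inl 2, Sum.inl 3) ∈ M := by rwa [Sym2.eq_swap]
          have := pp_uniq hM h1' h3'
          simp at this
        · -- config E
          have hP : FE p ⊆ M := by
            rw [show (1 : Fin 4) + 1 = 2 by decide] at hu1
            simp [FE, Finset.insert_subset_iff, hu0, hu1, hu3]
          have hNA : ¬ (FA ⊆ M) := nosub hM (Sum.inl 1) (by simp [FA]) hu0 (by simp)
          have hNB : ¬ (FB ⊆ M) := nosub hM (Sum.inl 3) (by simp [FB]) hu0 (by simp)
          have hNC : ¬ (FC p ⊆ M) := nosub hM (Sum.inl 1) (by simp [FC]) hu0 (by simp)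
          have hND : ¬ (FD p ⊆ M) := nosub hM (Sum.inl 3) (by simp [FD]) hu0 (by simp)
          have hNF : ¬ (FF p ⊆ M) := nosub hM (Sum.inr (p 1)) (by simp [FF]) hu1 (by simp)
          have hNG : ¬ (FG p ⊆ M) := nosub hM (Sum.inr (p 1)) (by simp [FG]) hu1 (by simp)
          rw [if_neg hNA, if_neg hNB, if_neg hNC, if_neg hND, if_pos hP, if_neg hNF, if_neg hNG]
          ring
      · -- u1 = inl 0 : impossible
        have h1' : s(Sum.inl 0, Sum.inl 1) ∈ M := by rwa [Sym2.eq_swap]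
        have := pp_uniq hM h1' hu0
        simp at this
      · -- u1 = inr p 1
        obtain ⟨u2, hu2⟩ := pp_partner hM (Sum.inl 2)
        rcases mem3 p wB hdiag1 hdiag2 hnopend hM 2 hu2 (hnz hu2) with h | h | h <;>
          (try norm_num at h) <;> subst h
        · -- config F
          have hP : FF p ⊆ M := by
            rw [show (2 : Fin 4) + 1 = 3 by decide] at hu2
            simp [FF, Finset.insert_subset_iff, hu0, hu1, hu2]
          have hNA : ¬ (FA ⊆ M) := nosub hM (Sum.inl 1) (by simp [FA]) hu0 (by simp)
          have hNB : ¬ (FB ⊆ M) := nosub hM (Sum.inl 3) (by simp [FB]) hu0 (by simp)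
          have hNC : ¬ (FC p ⊆ M) := nosub hM (Sum.inl 1) (by simp [FC]) hu0 (by simp)
          have hND : ¬ (FD p ⊆ M) := nosub hM (Sum.inl 3) (by simp [FD]) hu0 (by simp)
          have hNE : ¬ (FE p ⊆ M) := nosub hM (Sum.inl 2) (by simp [FE]) hu1 (by simp)
          have hNG : ¬ (FG p ⊆ M) := nosub hM (Sum.inr (p 2)) (by simp [FG]) hu2 (by simp)
          rw [if_neg hNA, if_neg hNB, if_neg hNC, if_neg hND, if_neg hNE, if_pos hP, if_neg hNG]
          ring
        · have h2' : s(Sum.inl 1, Sum.inl 2) ∈ M := by rwa [Sym2.eq_swap]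
          have := pp_uniq hM hu1 h2'
          simp at this
        · -- u2 = inr p 2
          obtain ⟨u3, hu3⟩ := pp_partner hM (Sum.inl 3)
          rcases mem3 p wB hdiag1 hdiag2 hnopend hM 3 hu3 (hnz hu3) with h | h | h <;>
            (try norm_num at h) <;> subst h
          · have h3' : s(Sum.inl 0, Sum.inl 3) ∈ M := by rwa [Sym2.eq_swap]
            have := pp_uniq hM hu0 h3'
            simp at this
          · have h3' : s(Sum.inl 2, Sum.inl 3) ∈ M := by rwa [Sym2.eq_swap]
            have := pp_uniq hM hu2 h3'
            simp at this
          · -- config G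
            have hP : FG p ⊆ M := by
              simp [FG, Finset.insert_subset_iff, hu0, hu1, hu2, hu3]
            have hNA : ¬ (FA ⊆ M) := nosub hM (Sum.inl 1) (by simp [FA]) hu0 (by simp)
            have hNB : ¬ (FB ⊆ M) := nosub hM (Sum.inl 3) (by simp [FB]) hu0 (by simp)
            have hNC : ¬ (FC p ⊆ M) := nosub hM (Sum.inl 1) (by simp [FC]) hu0 (by simp)
            have hND : ¬ (FD p ⊆ M) := nosub hM (Sum.inl 3) (by simp [FD]) hu0 (by simp)
            have hNE : ¬ (FE p ⊆ M) := nosub hM (Sum.inl 2) (by simp [FE]) hu1 (by simp)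
            have hNF : ¬ (FF p ⊆ M) := nosub hM (Sum.inl 3) (by simp [FF]) hu2 (by simp)
            rw [if_neg hNA, if_neg hNB, if_neg hNC, if_neg hND, if_neg hNE, if_neg hNF, if_pos hP]
            ring

end Before

section After

variable {W : Type} (p : Fin 4 → W) (hp : Function.Injective p)
  (wrest wA : Sym2 W → ℝ)

lemma prod_ext1 {α : Type} [DecidableEq α] (f : α → ℝ) {s : Finset α} {a : α} (ha : a ∈ s) :
    ∏ x ∈ s, f x = f a * ∏ x ∈ s \ {a}, f x := by
  rw [Finset.sdiff_singleton_eq_erase, ← Finset.mul_prod_erase s f ha]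

lemma sdiff_pair {α : Type} [DecidableEq α] (s : Finset α) (a b : α) :
    (s \ {a}) \ {b} = s \ {a, b} := by
  ext x
  simp only [Finset.mem_sdiff, Finset.mem_singleton, Finset.mem_insert, not_or]
  tauto

lemma prod_ext2 {α : Type} [DecidableEq α] (f : α → ℝ) {s : Finset α} {a b : α}
    (ha : a ∈ s) (hb : b ∈ s) (hab : a ≠ b) :
    ∏ x ∈ s, f x = f a * f b * ∏ x ∈ s \ {a, b}, f x := by
  rw [prod_ext1 f ha, prod_ext1 f (show b ∈ s \ {a} by simp [hb, Ne.symm hab]),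
    sdiff_pair, mul_assoc]

omit hp in
lemma excl_adj {pp : Fin 4 → W} (hp : Function.Injective pp)
    {M : Finset (Sym2 W)} (hM : IsPerfectPairing M) {a b c : Fin 4}
    (h1 : s(pp a, pp b) ∈ M) (h2 : s(pp a, pp c) ∈ M) (hbc : b ≠ c) : False :=
  hbc (hp (pp_uniq hM h1 h2))

variable (hAsq : ∀ i : Fin 4, wA s(p i, p (i + 1)) = wrest s(p i, p (i + 1)) + 1 / 2)
  (hAother : ∀ s : Sym2 W, (∀ i : Fin 4, s ≠ s(p i, p (i + 1))) → wA s = wrest s)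

include hp hAsq hAother in
lemma key_after {M : Finset (Sym2 W)} (hM : IsPerfectPairing M) :
    ∏ q ∈ M, wA q =
      (∏ q ∈ M, wrest q)
      + (if {s(p 0, p 1)} ⊆ M then (1/2) * ∏ q ∈ M \ {s(p 0, p 1)}, wrest q else 0)
      + (if {s(p 1, p 2)} ⊆ M then (1/2) * ∏ q ∈ M \ {s(p 1, p 2)}, wrest q else 0)
      + (if {s(p 2, p 3)} ⊆ M then (1/2) * ∏ q ∈ M \ {s(p 2, p 3)}, wrest q else 0)
      + (if {s(p 3, p 0)} ⊆ M then (1/2) * ∏ q ∈ M \ {s(p 3, p 0)}, wrest q else 0)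
      + (if {s(p 0, p 1), s(p 2, p 3)} ⊆ M then (1/4) * ∏ q ∈ M \ {s(p 0, p 1), s(p 2, p 3)}, wrest q else 0)
      + (if {s(p 1, p 2), s(p 3, p 0)} ⊆ M then (1/4) * ∏ q ∈ M \ {s(p 1, p 2), s(p 3, p 0)}, wrest q else 0) := by
  have hw0 : wA s(p 0, p 1) = wrest s(p 0, p 1) + 1/2 := by have := hAsq 0; norm_num at this; exact this
  have hw1 : wA s(p 1, p 2) = wrest s(p 1, p 2) + 1/2 := by have := hAsq 1; norm_num at this; exact this
  have hw2 : wA s(p 2, p 3) = wrest s(p 2, p 3) + 1/2 := by have := hAsq 2; norm_num at this; exact this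
  have hw3 : wA s(p 3, p 0) = wrest s(p 3, p 0) + 1/2 := by have := hAsq 3; norm_num at this; exact this
  have hAother' : ∀ q : Sym2 W, q ≠ s(p 0, p 1) → q ≠ s(p 1, p 2) → q ≠ s(p 2, p 3) →
      q ≠ s(p 3, p 0) → wA q = wrest q := by
    intro q n0 n1 n2 n3
    apply hAother
    intro i
    fin_cases i
    · exact n0
    · exact n1
    · exact n2
    · exact n3
  by_cases h0 : s(p 0, p 1) ∈ M
  · have h0s : s(p 1, p 0) ∈ M := by rwa [Sym2.eq_swap]
    have hn1 : s(p 1, p 2) ∉ M := fun h => excl_adj hp hM h0s h (by decide)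
    have hn3 : s(p 3, p 0) ∉ M := fun h =>
      excl_adj hp hM h0 (by rwa [Sym2.eq_swap] at h) (by decide)
    by_cases h2 : s(p 2, p 3) ∈ M
    · -- leaf {s(p 0, p 1), s(p 2, p 3)}
      have hconv : ∏ q ∈ M \ {s(p 0, p 1), s(p 2, p 3)}, wA q = ∏ q ∈ M \ {s(p 0, p 1), s(p 2, p 3)}, wrest q := by
        refine Finset.prod_congr rfl (fun q hq => ?_)
        simp only [Finset.mem_sdiff, Finset.mem_singleton, Finset.mem_insert, not_or] at hq
        exact hAother' q hq.2.1 (fun hh => hn1 (hh ▸ hq.1)) hq.2.2 (fun hh => hn3 (hh ▸ hq.1))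
      have hne : s(p 0, p 1) ≠ s(p 2, p 3) := by simp [Sym2.eq_iff, hp.eq_iff]
      have hx1 : ∏ q ∈ M, wA q = wA s(p 0, p 1) * wA s(p 2, p 3) * ∏ q ∈ M \ {s(p 0, p 1), s(p 2, p 3)}, wA q := prod_ext2 wA h0 h2 hne
      have hx2 : ∏ q ∈ M, wrest q = wrest s(p 0, p 1) * wrest s(p 2, p 3) * ∏ q ∈ M \ {s(p 0, p 1), s(p 2, p 3)}, wrest q := prod_ext2 wrest h0 h2 hne
      have hxa : ∏ q ∈ M \ {s(p 0, p 1)}, wrest q = wrest s(p 2, p 3) * ∏ q ∈ M \ {s(p 0, p 1), s(p 2, p 3)}, wrest q := by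
        rw [prod_ext1 wrest (show s(p 2, p 3) ∈ M \ {s(p 0, p 1)} by simp [h2, Ne.symm hne]), sdiff_pair]
      have hxb : ∏ q ∈ M \ {s(p 2, p 3)}, wrest q = wrest s(p 0, p 1) * ∏ q ∈ M \ {s(p 0, p 1), s(p 2, p 3)}, wrest q := by
        rw [prod_ext1 wrest (show s(p 0, p 1) ∈ M \ {s(p 2, p 3)} by simp [h0, hne]), sdiff_pair, Finset.pair_comm (s(p 2, p 3)) (s(p 0, p 1))]
      rw [hx1, hconv, hx2, hxa, hxb, if_pos (Finset.singleton_subset_iff.2 h0), if_neg (fun hs => hn1 (hs (Finset.mem_singleton_self _))), if_pos (Finset.singleton_subset_iff.2 h2), if_neg (fun hs => hn3 (hs (Finset.mem_singleton_self _))), if_pos (by simp [Finset.insert_subset_iff, h0, h2]), if_neg (fun hs => hn1 (hs (by simp))), hw0, hw2]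
      ring
    · -- leaf {s(p 0, p 1)}
      have hconv : ∏ q ∈ M \ {s(p 0, p 1)}, wA q = ∏ q ∈ M \ {s(p 0, p 1)}, wrest q := by
        refine Finset.prod_congr rfl (fun q hq => ?_)
        simp only [Finset.mem_sdiff, Finset.mem_singleton, Finset.mem_insert, not_or] at hq
        exact hAother' q hq.2 (fun hh => hn1 (hh ▸ hq.1)) (fun hh => h2 (hh ▸ hq.1)) (fun hh => hn3 (hh ▸ hq.1))
      have hx1 : ∏ q ∈ M, wA q = wA s(p 0, p 1) * ∏ q ∈ M \ {s(p 0, p 1)}, wA q := prod_ext1 wA h0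
      have hx2 : ∏ q ∈ M, wrest q = wrest s(p 0, p 1) * ∏ q ∈ M \ {s(p 0, p 1)}, wrest q := prod_ext1 wrest h0
      rw [hx1, hconv, hx2, if_pos (Finset.singleton_subset_iff.2 h0), if_neg (fun hs => hn1 (hs (Finset.mem_singleton_self _))), if_neg (fun hs => h2 (hs (Finset.mem_singleton_self _))), if_neg (fun hs => hn3 (hs (Finset.mem_singleton_self _))), if_neg (fun hs => h2 (hs (by simp))), if_neg (fun hs => hn1 (hs (by simp))), hw0]
      ring
  · by_cases h1 : s(p 1, p 2) ∈ M
    · have h1s : s(p 2, p 1) ∈ M := by rwa [Sym2.eq_swap]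
      have hn2 : s(p 2, p 3) ∉ M := fun h => excl_adj hp hM h1s h (by decide)
      by_cases h3 : s(p 3, p 0) ∈ M
      · -- leaf {s(p 1, p 2), s(p 3, p 0)}
        have hconv : ∏ q ∈ M \ {s(p 1, p 2), s(p 3, p 0)}, wA q = ∏ q ∈ M \ {s(p 1, p 2), s(p 3, p 0)}, wrest q := by
          refine Finset.prod_congr rfl (fun q hq => ?_)
          simp only [Finset.mem_sdiff, Finset.mem_singleton, Finset.mem_insert, not_or] at hq
          exact hAother' q (fun hh => h0 (hh ▸ hq.1)) hq.2.1 (fun hh => hn2 (hh ▸ hq.1)) hq.2.2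
        have hne : s(p 1, p 2) ≠ s(p 3, p 0) := by simp [Sym2.eq_iff, hp.eq_iff]
        have hx1 : ∏ q ∈ M, wA q = wA s(p 1, p 2) * wA s(p 3, p 0) * ∏ q ∈ M \ {s(p 1, p 2), s(p 3, p 0)}, wA q := prod_ext2 wA h1 h3 hne
        have hx2 : ∏ q ∈ M, wrest q = wrest s(p 1, p 2) * wrest s(p 3, p 0) * ∏ q ∈ M \ {s(p 1, p 2), s(p 3, p 0)}, wrest q := prod_ext2 wrest h1 h3 hne
        have hxa : ∏ q ∈ M \ {s(p 1, p 2)}, wrest q = wrest s(p 3, p 0) * ∏ q ∈ M \ {s(p 1, p 2), s(p 3, p 0)}, wrest q := by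
          rw [prod_ext1 wrest (show s(p 3, p 0) ∈ M \ {s(p 1, p 2)} by simp [h3, Ne.symm hne]), sdiff_pair]
        have hxb : ∏ q ∈ M \ {s(p 3, p 0)}, wrest q = wrest s(p 1, p 2) * ∏ q ∈ M \ {s(p 1, p 2), s(p 3, p 0)}, wrest q := by
          rw [prod_ext1 wrest (show s(p 1, p 2) ∈ M \ {s(p 3, p 0)} by simp [h1, hne]), sdiff_pair, Finset.pair_comm (s(p 3, p 0)) (s(p 1, p 2))]
        rw [hx1, hconv, hx2, hxa, hxb, if_neg (fun hs => h0 (hs (Finset.mem_singleton_self _))), if_pos (Finset.singleton_subset_iff.2 h1), if_neg (fun hs => hn2 (hs (Finset.mem_singleton_self _))), if_pos (Finset.singleton_subset_iff.2 h3), if_neg (fun hs => h0 (hs (by simp))), if_pos (by simp [Finset.insert_subset_iff, h1, h3]), hw1, hw3]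
        ring
      · -- leaf {s(p 1, p 2)}
        have hconv : ∏ q ∈ M \ {s(p 1, p 2)}, wA q = ∏ q ∈ M \ {s(p 1, p 2)}, wrest q := by
          refine Finset.prod_congr rfl (fun q hq => ?_)
          simp only [Finset.mem_sdiff, Finset.mem_singleton, Finset.mem_insert, not_or] at hq
          exact hAother' q (fun hh => h0 (hh ▸ hq.1)) hq.2 (fun hh => hn2 (hh ▸ hq.1)) (fun hh => h3 (hh ▸ hq.1))
        have hx1 : ∏ q ∈ M, wA q = wA s(p 1, p 2) * ∏ q ∈ M \ {s(p 1, p 2)}, wA q := prod_ext1 wA h1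
        have hx2 : ∏ q ∈ M, wrest q = wrest s(p 1, p 2) * ∏ q ∈ M \ {s(p 1, p 2)}, wrest q := prod_ext1 wrest h1
        rw [hx1, hconv, hx2, if_neg (fun hs => h0 (hs (Finset.mem_singleton_self _))), if_pos (Finset.singleton_subset_iff.2 h1), if_neg (fun hs => hn2 (hs (Finset.mem_singleton_self _))), if_neg (fun hs => h3 (hs (Finset.mem_singleton_self _))), if_neg (fun hs => h0 (hs (by simp))), if_neg (fun hs => h3 (hs (by simp))), hw1]
        ring
    · by_cases h2 : s(p 2, p 3) ∈ M
      · have h2s : s(p 3, p 2) ∈ M := by rwa [Sym2.eq_swap]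
        have hn3 : s(p 3, p 0) ∉ M := fun h => excl_adj hp hM h2s h (by decide)
        -- leaf {s(p 2, p 3)}
        have hconv : ∏ q ∈ M \ {s(p 2, p 3)}, wA q = ∏ q ∈ M \ {s(p 2, p 3)}, wrest q := by
          refine Finset.prod_congr rfl (fun q hq => ?_)
          simp only [Finset.mem_sdiff, Finset.mem_singleton, Finset.mem_insert, not_or] at hq
          exact hAother' q (fun hh => h0 (hh ▸ hq.1)) (fun hh => h1 (hh ▸ hq.1)) hq.2 (fun hh => hn3 (hh ▸ hq.1))
        have hx1 : ∏ q ∈ M, wA q = wA s(p 2, p 3) * ∏ q ∈ M \ {s(p 2, p 3)}, wA q := prod_ext1 wA h2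
        have hx2 : ∏ q ∈ M, wrest q = wrest s(p 2, p 3) * ∏ q ∈ M \ {s(p 2, p 3)}, wrest q := prod_ext1 wrest h2
        rw [hx1, hconv, hx2, if_neg (fun hs => h0 (hs (Finset.mem_singleton_self _))), if_neg (fun hs => h1 (hs (Finset.mem_singleton_self _))), if_pos (Finset.singleton_subset_iff.2 h2), if_neg (fun hs => hn3 (hs (Finset.mem_singleton_self _))), if_neg (fun hs => h0 (hs (by simp))), if_neg (fun hs => h1 (hs (by simp))), hw2]
        ring
      · by_cases h3 : s(p 3, p 0) ∈ M
        · -- leaf {s(p 3, p 0)}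
          have hconv : ∏ q ∈ M \ {s(p 3, p 0)}, wA q = ∏ q ∈ M \ {s(p 3, p 0)}, wrest q := by
            refine Finset.prod_congr rfl (fun q hq => ?_)
            simp only [Finset.mem_sdiff, Finset.mem_singleton, Finset.mem_insert, not_or] at hq
            exact hAother' q (fun hh => h0 (hh ▸ hq.1)) (fun hh => h1 (hh ▸ hq.1)) (fun hh => h2 (hh ▸ hq.1)) hq.2
          have hx1 : ∏ q ∈ M, wA q = wA s(p 3, p 0) * ∏ q ∈ M \ {s(p 3, p 0)}, wA q := prod_ext1 wA h3
          have hx2 : ∏ q ∈ M, wrest q = wrest s(p 3, p 0) * ∏ q ∈ M \ {s(p 3, p 0)}, wrest q := prod_ext1 wrest h3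
          rw [hx1, hconv, hx2, if_neg (fun hs => h0 (hs (Finset.mem_singleton_self _))), if_neg (fun hs => h1 (hs (Finset.mem_singleton_self _))), if_neg (fun hs => h2 (hs (Finset.mem_singleton_self _))), if_pos (Finset.singleton_subset_iff.2 h3), if_neg (fun hs => h0 (hs (by simp))), if_neg (fun hs => h1 (hs (by simp))), hw3]
          ring
        · -- leaf ∅
          have hconv : ∏ q ∈ M, wA q = ∏ q ∈ M, wrest q := by
            refine Finset.prod_congr rfl (fun q hq => ?_)
            exact hAother' q (fun hh => h0 (hh ▸ hq)) (fun hh => h1 (hh ▸ hq)) (fun hh => h2 (hh ▸ hq)) (fun hh => h3 (hh ▸ hq))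
          rw [hconv, if_neg (fun hs => h0 (hs (Finset.mem_singleton_self _))), if_neg (fun hs => h1 (hs (Finset.mem_singleton_self _))), if_neg (fun hs => h2 (hs (Finset.mem_singleton_self _))), if_neg (fun hs => h3 (hs (Finset.mem_singleton_self _))), if_neg (fun hs => h0 (hs (by simp))), if_neg (fun hs => h1 (hs (by simp)))]
          ring

end After


section Assemble

variable {W : Type} [Fintype W]

noncomputable def Nsub (wrest : Sym2 W → ℝ) (s : Finset W) : ℝ :=
  matchSum (fun q : Sym2 {v : W // ¬ v ∈ s} => wrest (q.map Subtype.val))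

def sumEquiv (s : Finset W) : {v : W // ¬ v ∈ s} ≃
    {v : Fin 4 ⊕ W // ¬ Sum.elim (fun _ => True) (fun v => v ∈ s) v} where
  toFun x := ⟨Sum.inr x.1, x.2⟩
  invFun y :=
    match y with
    | ⟨Sum.inl _, h⟩ => absurd trivial h
    | ⟨Sum.inr v, h⟩ => ⟨v, h⟩
  left_inv x := rfl
  right_inv y := by
    rcases y with ⟨x | v, h⟩
    · exact absurd trivial h
    · rfl

lemma config_step (p : Fin 4 → W) (wB : Sym2 (Fin 4 ⊕ W) → ℝ) (wrest : Sym2 W → ℝ)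
    (hrest : ∀ v v' : W, wB s(Sum.inr v, Sum.inr v') = wrest s(v, v'))
    (F : Finset (Sym2 (Fin 4 ⊕ W))) (s : Finset W)
    (hnd : ∀ q ∈ F, ¬ q.IsDiag)
    (hdisj : ∀ q ∈ F, ∀ q' ∈ F, ∀ v, v ∈ q → v ∈ q' → q = q')
    (hcov : ∀ v : Fin 4 ⊕ W, Sum.elim (fun _ => True) (fun v => v ∈ s) v ↔ ∃ q ∈ F, v ∈ q) :
    ∑ M : {M : Finset (Sym2 (Fin 4 ⊕ W)) // IsPerfectPairing M},
      (if F ⊆ M.1 then ∏ q ∈ M.1 \ F, wB q else 0) = Nsub wrest s := by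
  rw [sum_split wB hnd hdisj hcov]
  rw [← matchSum_equiv (sumEquiv s)
    (fun q : Sym2 {v : Fin 4 ⊕ W // ¬ Sum.elim (fun _ => True) (fun v => v ∈ s) v} =>
      wB (q.map Subtype.val))]
  rw [Nsub]
  apply congrArg
  funext q
  induction q using Sym2.ind with
  | _ a b =>
    simp only [Sym2.map_pair_eq, sumEquiv, Equiv.coe_fn_mk]
    exact hrest a.1 b.1

lemma config_step_after (wrest : Sym2 W → ℝ) (F : Finset (Sym2 W)) (s : Finset W) (c : ℝ)
    (hnd : ∀ q ∈ F, ¬ q.IsDiag)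
    (hdisj : ∀ q ∈ F, ∀ q' ∈ F, ∀ v, v ∈ q → v ∈ q' → q = q')
    (hcov : ∀ v : W, v ∈ s ↔ ∃ q ∈ F, v ∈ q) :
    ∑ M : {M : Finset (Sym2 W) // IsPerfectPairing M},
      (if F ⊆ M.1 then c * ∏ q ∈ M.1 \ F, wrest q else 0) = c * Nsub wrest s := by
  rw [Nsub, ← sum_split wrest hnd hdisj hcov, Finset.mul_sum]
  exact Finset.sum_congr rfl (fun M _ => by by_cases h : F ⊆ M.1 <;> simp [h])

end Assemble


section Configs

variable {W : Type} (p : Fin 4 → W) (hp : Function.Injective p)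

lemma ndA : ∀ q ∈ FA (W := W), ¬ q.IsDiag := by
  intro q hq
  simp only [FA, Finset.mem_insert, Finset.mem_singleton] at hq
  rcases hq with rfl | rfl <;> simp [Sym2.mk_isDiag_iff]

include hp in
lemma disjA : ∀ q ∈ FA (W := W), ∀ q' ∈ FA, ∀ v, v ∈ q → v ∈ q' → q = q' := by
  intro q hq q' hq' v hv hv'
  simp only [FA, Finset.mem_insert, Finset.mem_singleton] at hq hq'
  rcases hq with rfl | rfl <;> rcases hq' with rfl | rfl <;>
    simp only [Sym2.mem_iff] at hv hv' <;>
    rcases hv with rfl | rfl <;> simp_all [hp.eq_iff]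

lemma covA : ∀ v : Fin 4 ⊕ W,
    Sum.elim (fun _ => True) (fun v => v ∈ (∅ : Finset W)) v ↔ ∃ q ∈ FA, v ∈ q := by
  have h4 : ∀ i : Fin 4, i = 0 ∨ i = 1 ∨ i = 2 ∨ i = 3 := by decide
  rintro (i | v)
  · simp only [Sum.elim_inl, true_iff]
    rcases h4 i with rfl | rfl | rfl | rfl
    · exact ⟨s(Sum.inl 0, Sum.inl 1), by simp [FA], by simp [Sym2.mem_iff]⟩
    · exact ⟨s(Sum.inl 0, Sum.inl 1), by simp [FA], by simp [Sym2.mem_iff]⟩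
    · exact ⟨s(Sum.inl 2, Sum.inl 3), by simp [FA], by simp [Sym2.mem_iff]⟩
    · exact ⟨s(Sum.inl 2, Sum.inl 3), by simp [FA], by simp [Sym2.mem_iff]⟩
  · simp only [Sum.elim_inr]
    simp [FA, Sym2.mem_iff]
    try tauto

lemma ndB : ∀ q ∈ FB (W := W), ¬ q.IsDiag := by
  intro q hq
  simp only [FB, Finset.mem_insert, Finset.mem_singleton] at hq
  rcases hq with rfl | rfl <;> simp [Sym2.mk_isDiag_iff]

include hp in
lemma disjB : ∀ q ∈ FB (W := W), ∀ q' ∈ FB, ∀ v, v ∈ q → v ∈ q' → q = q' := by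
  intro q hq q' hq' v hv hv'
  simp only [FB, Finset.mem_insert, Finset.mem_singleton] at hq hq'
  rcases hq with rfl | rfl <;> rcases hq' with rfl | rfl <;>
    simp only [Sym2.mem_iff] at hv hv' <;>
    rcases hv with rfl | rfl <;> simp_all [hp.eq_iff]

lemma covB : ∀ v : Fin 4 ⊕ W,
    Sum.elim (fun _ => True) (fun v => v ∈ (∅ : Finset W)) v ↔ ∃ q ∈ FB, v ∈ q := by
  have h4 : ∀ i : Fin 4, i = 0 ∨ i = 1 ∨ i = 2 ∨ i = 3 := by decide
  rintro (i | v)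
  · simp only [Sum.elim_inl, true_iff]
    rcases h4 i with rfl | rfl | rfl | rfl
    · exact ⟨s(Sum.inl 0, Sum.inl 3), by simp [FB], by simp [Sym2.mem_iff]⟩
    · exact ⟨s(Sum.inl 1, Sum.inl 2), by simp [FB], by simp [Sym2.mem_iff]⟩
    · exact ⟨s(Sum.inl 1, Sum.inl 2), by simp [FB], by simp [Sym2.mem_iff]⟩
    · exact ⟨s(Sum.inl 0, Sum.inl 3), by simp [FB], by simp [Sym2.mem_iff]⟩
  · simp only [Sum.elim_inr]
    simp [FB, Sym2.mem_iff]
    try tauto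

lemma ndC : ∀ q ∈ FC p (W := W), ¬ q.IsDiag := by
  intro q hq
  simp only [FC, Finset.mem_insert, Finset.mem_singleton] at hq
  rcases hq with rfl | rfl | rfl <;> simp [Sym2.mk_isDiag_iff]

include hp in
lemma disjC : ∀ q ∈ FC p (W := W), ∀ q' ∈ FC p, ∀ v, v ∈ q → v ∈ q' → q = q' := by
  intro q hq q' hq' v hv hv'
  simp only [FC, Finset.mem_insert, Finset.mem_singleton] at hq hq'
  rcases hq with rfl | rfl | rfl <;> rcases hq' with rfl | rfl | rfl <;>
    simp only [Sym2.mem_iff] at hv hv' <;>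
    rcases hv with rfl | rfl <;> simp_all [hp.eq_iff]

lemma covC : ∀ v : Fin 4 ⊕ W,
    Sum.elim (fun _ => True) (fun v => v ∈ ({p 2, p 3} : Finset W)) v ↔ ∃ q ∈ FC p, v ∈ q := by
  have h4 : ∀ i : Fin 4, i = 0 ∨ i = 1 ∨ i = 2 ∨ i = 3 := by decide
  rintro (i | v)
  · simp only [Sum.elim_inl, true_iff]
    rcases h4 i with rfl | rfl | rfl | rfl
    · exact ⟨s(Sum.inl 0, Sum.inl 1), by simp [FC], by simp [Sym2.mem_iff]⟩
    · exact ⟨s(Sum.inl 0, Sum.inl 1), by simp [FC], by simp [Sym2.mem_iff]⟩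
    · exact ⟨s(Sum.inl 2, Sum.inr (p 2)), by simp [FC], by simp [Sym2.mem_iff]⟩
    · exact ⟨s(Sum.inl 3, Sum.inr (p 3)), by simp [FC], by simp [Sym2.mem_iff]⟩
  · simp only [Sum.elim_inr]
    simp [FC, Sym2.mem_iff]
    try tauto

lemma ndD : ∀ q ∈ FD p (W := W), ¬ q.IsDiag := by
  intro q hq
  simp only [FD, Finset.mem_insert, Finset.mem_singleton] at hq
  rcases hq with rfl | rfl | rfl <;> simp [Sym2.mk_isDiag_iff]

include hp in
lemma disjD : ∀ q ∈ FD p (W := W), ∀ q' ∈ FD p, ∀ v, v ∈ q → v ∈ q' → q = q' := by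
  intro q hq q' hq' v hv hv'
  simp only [FD, Finset.mem_insert, Finset.mem_singleton] at hq hq'
  rcases hq with rfl | rfl | rfl <;> rcases hq' with rfl | rfl | rfl <;>
    simp only [Sym2.mem_iff] at hv hv' <;>
    rcases hv with rfl | rfl <;> simp_all [hp.eq_iff]

lemma covD : ∀ v : Fin 4 ⊕ W,
    Sum.elim (fun _ => True) (fun v => v ∈ ({p 1, p 2} : Finset W)) v ↔ ∃ q ∈ FD p, v ∈ q := by
  have h4 : ∀ i : Fin 4, i = 0 ∨ i = 1 ∨ i = 2 ∨ i = 3 := by decide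
  rintro (i | v)
  · simp only [Sum.elim_inl, true_iff]
    rcases h4 i with rfl | rfl | rfl | rfl
    · exact ⟨s(Sum.inl 0, Sum.inl 3), by simp [FD], by simp [Sym2.mem_iff]⟩
    · exact ⟨s(Sum.inl 1, Sum.inr (p 1)), by simp [FD], by simp [Sym2.mem_iff]⟩
    · exact ⟨s(Sum.inl 2, Sum.inr (p 2)), by simp [FD], by simp [Sym2.mem_iff]⟩
    · exact ⟨s(Sum.inl 0, Sum.inl 3), by simp [FD], by simp [Sym2.mem_iff]⟩
  · simp only [Sum.elim_inr]
    simp [FD, Sym2.mem_iff]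
    try tauto

lemma ndE : ∀ q ∈ FE p (W := W), ¬ q.IsDiag := by
  intro q hq
  simp only [FE, Finset.mem_insert, Finset.mem_singleton] at hq
  rcases hq with rfl | rfl | rfl <;> simp [Sym2.mk_isDiag_iff]

include hp in
lemma disjE : ∀ q ∈ FE p (W := W), ∀ q' ∈ FE p, ∀ v, v ∈ q → v ∈ q' → q = q' := by
  intro q hq q' hq' v hv hv'
  simp only [FE, Finset.mem_insert, Finset.mem_singleton] at hq hq'
  rcases hq with rfl | rfl | rfl <;> rcases hq' with rfl | rfl | rfl <;>
    simp only [Sym2.mem_iff] at hv hv' <;>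
    rcases hv with rfl | rfl <;> simp_all [hp.eq_iff]

lemma covE : ∀ v : Fin 4 ⊕ W,
    Sum.elim (fun _ => True) (fun v => v ∈ ({p 0, p 3} : Finset W)) v ↔ ∃ q ∈ FE p, v ∈ q := by
  have h4 : ∀ i : Fin 4, i = 0 ∨ i = 1 ∨ i = 2 ∨ i = 3 := by decide
  rintro (i | v)
  · simp only [Sum.elim_inl, true_iff]
    rcases h4 i with rfl | rfl | rfl | rfl
    · exact ⟨s(Sum.inl 0, Sum.inr (p 0)), by simp [FE], by simp [Sym2.mem_iff]⟩
    · exact ⟨s(Sum.inl 1, Sum.inl 2), by simp [FE], by simp [Sym2.mem_iff]⟩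
    · exact ⟨s(Sum.inl 1, Sum.inl 2), by simp [FE], by simp [Sym2.mem_iff]⟩
    · exact ⟨s(Sum.inl 3, Sum.inr (p 3)), by simp [FE], by simp [Sym2.mem_iff]⟩
  · simp only [Sum.elim_inr]
    simp [FE, Sym2.mem_iff]
    try tauto

lemma ndF : ∀ q ∈ FF p (W := W), ¬ q.IsDiag := by
  intro q hq
  simp only [FF, Finset.mem_insert, Finset.mem_singleton] at hq
  rcases hq with rfl | rfl | rfl <;> simp [Sym2.mk_isDiag_iff]

include hp in
lemma disjF : ∀ q ∈ FF p (W := W), ∀ q' ∈ FF p, ∀ v, v ∈ q → v ∈ q' → q = q' := by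
  intro q hq q' hq' v hv hv'
  simp only [FF, Finset.mem_insert, Finset.mem_singleton] at hq hq'
  rcases hq with rfl | rfl | rfl <;> rcases hq' with rfl | rfl | rfl <;>
    simp only [Sym2.mem_iff] at hv hv' <;>
    rcases hv with rfl | rfl <;> simp_all [hp.eq_iff]

lemma covF : ∀ v : Fin 4 ⊕ W,
    Sum.elim (fun _ => True) (fun v => v ∈ ({p 0, p 1} : Finset W)) v ↔ ∃ q ∈ FF p, v ∈ q := by
  have h4 : ∀ i : Fin 4, i = 0 ∨ i = 1 ∨ i = 2 ∨ i = 3 := by decide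
  rintro (i | v)
  · simp only [Sum.elim_inl, true_iff]
    rcases h4 i with rfl | rfl | rfl | rfl
    · exact ⟨s(Sum.inl 0, Sum.inr (p 0)), by simp [FF], by simp [Sym2.mem_iff]⟩
    · exact ⟨s(Sum.inl 1, Sum.inr (p 1)), by simp [FF], by simp [Sym2.mem_iff]⟩
    · exact ⟨s(Sum.inl 2, Sum.inl 3), by simp [FF], by simp [Sym2.mem_iff]⟩
    · exact ⟨s(Sum.inl 2, Sum.inl 3), by simp [FF], by simp [Sym2.mem_iff]⟩
  · simp only [Sum.elim_inr]
    simp [FF, Sym2.mem_iff]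
    try tauto

lemma ndG : ∀ q ∈ FG p (W := W), ¬ q.IsDiag := by
  intro q hq
  simp only [FG, Finset.mem_insert, Finset.mem_singleton] at hq
  rcases hq with rfl | rfl | rfl | rfl <;> simp [Sym2.mk_isDiag_iff]

include hp in
lemma disjG : ∀ q ∈ FG p (W := W), ∀ q' ∈ FG p, ∀ v, v ∈ q → v ∈ q' → q = q' := by
  intro q hq q' hq' v hv hv'
  simp only [FG, Finset.mem_insert, Finset.mem_singleton] at hq hq'
  rcases hq with rfl | rfl | rfl | rfl <;> rcases hq' with rfl | rfl | rfl | rfl <;>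
    simp only [Sym2.mem_iff] at hv hv' <;>
    rcases hv with rfl | rfl <;> simp_all [hp.eq_iff]

lemma covG : ∀ v : Fin 4 ⊕ W,
    Sum.elim (fun _ => True) (fun v => v ∈ ({p 0, p 1, p 2, p 3} : Finset W)) v ↔ ∃ q ∈ FG p, v ∈ q := by
  have h4 : ∀ i : Fin 4, i = 0 ∨ i = 1 ∨ i = 2 ∨ i = 3 := by decide
  rintro (i | v)
  · simp only [Sum.elim_inl, true_iff]
    rcases h4 i with rfl | rfl | rfl | rfl
    · exact ⟨s(Sum.inl 0, Sum.inr (p 0)), by simp [FG], by simp [Sym2.mem_iff]⟩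
    · exact ⟨s(Sum.inl 1, Sum.inr (p 1)), by simp [FG], by simp [Sym2.mem_iff]⟩
    · exact ⟨s(Sum.inl 2, Sum.inr (p 2)), by simp [FG], by simp [Sym2.mem_iff]⟩
    · exact ⟨s(Sum.inl 3, Sum.inr (p 3)), by simp [FG], by simp [Sym2.mem_iff]⟩
  · simp only [Sum.elim_inr]
    simp [FG, Sym2.mem_iff]
    try tauto

include hp in
lemma nda0 : ∀ q ∈ ({s(p 0, p 1)} : Finset (Sym2 W)), ¬ q.IsDiag := by
  intro q hq
  simp only [Finset.mem_insert, Finset.mem_singleton] at hq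
  rcases hq with rfl <;> simp [Sym2.mk_isDiag_iff, hp.eq_iff]

include hp in
lemma disja0 : ∀ q ∈ ({s(p 0, p 1)} : Finset (Sym2 W)), ∀ q' ∈ ({s(p 0, p 1)} : Finset (Sym2 W)), ∀ v, v ∈ q → v ∈ q' → q = q' := by
  intro q hq q' hq' v hv hv'
  simp only [Finset.mem_insert, Finset.mem_singleton] at hq hq'
  rcases hq with rfl <;> rcases hq' with rfl <;>
    simp only [Sym2.mem_iff] at hv hv' <;>
    rcases hv with rfl | rfl <;> simp_all [hp.eq_iff]

lemma cova0 : ∀ v : W, v ∈ ({p 0, p 1} : Finset W) ↔ ∃ q ∈ ({s(p 0, p 1)} : Finset (Sym2 W)), v ∈ q := by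
  intro v
  simp [Sym2.mem_iff]
  try tauto

include hp in
lemma nda1 : ∀ q ∈ ({s(p 1, p 2)} : Finset (Sym2 W)), ¬ q.IsDiag := by
  intro q hq
  simp only [Finset.mem_insert, Finset.mem_singleton] at hq
  rcases hq with rfl <;> simp [Sym2.mk_isDiag_iff, hp.eq_iff]

include hp in
lemma disja1 : ∀ q ∈ ({s(p 1, p 2)} : Finset (Sym2 W)), ∀ q' ∈ ({s(p 1, p 2)} : Finset (Sym2 W)), ∀ v, v ∈ q → v ∈ q' → q = q' := by
  intro q hq q' hq' v hv hv'
  simp only [Finset.mem_insert, Finset.mem_singleton] at hq hq'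
  rcases hq with rfl <;> rcases hq' with rfl <;>
    simp only [Sym2.mem_iff] at hv hv' <;>
    rcases hv with rfl | rfl <;> simp_all [hp.eq_iff]

lemma cova1 : ∀ v : W, v ∈ ({p 1, p 2} : Finset W) ↔ ∃ q ∈ ({s(p 1, p 2)} : Finset (Sym2 W)), v ∈ q := by
  intro v
  simp [Sym2.mem_iff]
  try tauto

include hp in
lemma nda2 : ∀ q ∈ ({s(p 2, p 3)} : Finset (Sym2 W)), ¬ q.IsDiag := by
  intro q hq
  simp only [Finset.mem_insert, Finset.mem_singleton] at hq
  rcases hq with rfl <;> simp [Sym2.mk_isDiag_iff, hp.eq_iff]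

include hp in
lemma disja2 : ∀ q ∈ ({s(p 2, p 3)} : Finset (Sym2 W)), ∀ q' ∈ ({s(p 2, p 3)} : Finset (Sym2 W)), ∀ v, v ∈ q → v ∈ q' → q = q' := by
  intro q hq q' hq' v hv hv'
  simp only [Finset.mem_insert, Finset.mem_singleton] at hq hq'
  rcases hq with rfl <;> rcases hq' with rfl <;>
    simp only [Sym2.mem_iff] at hv hv' <;>
    rcases hv with rfl | rfl <;> simp_all [hp.eq_iff]

lemma cova2 : ∀ v : W, v ∈ ({p 2, p 3} : Finset W) ↔ ∃ q ∈ ({s(p 2, p 3)} : Finset (Sym2 W)), v ∈ q := by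
  intro v
  simp [Sym2.mem_iff]
  try tauto

include hp in
lemma nda3 : ∀ q ∈ ({s(p 3, p 0)} : Finset (Sym2 W)), ¬ q.IsDiag := by
  intro q hq
  simp only [Finset.mem_insert, Finset.mem_singleton] at hq
  rcases hq with rfl <;> simp [Sym2.mk_isDiag_iff, hp.eq_iff]

include hp in
lemma disja3 : ∀ q ∈ ({s(p 3, p 0)} : Finset (Sym2 W)), ∀ q' ∈ ({s(p 3, p 0)} : Finset (Sym2 W)), ∀ v, v ∈ q → v ∈ q' → q = q' := by
  intro q hq q' hq' v hv hv'
  simp only [Finset.mem_insert, Finset.mem_singleton] at hq hq'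
  rcases hq with rfl <;> rcases hq' with rfl <;>
    simp only [Sym2.mem_iff] at hv hv' <;>
    rcases hv with rfl | rfl <;> simp_all [hp.eq_iff]

lemma cova3 : ∀ v : W, v ∈ ({p 0, p 3} : Finset W) ↔ ∃ q ∈ ({s(p 3, p 0)} : Finset (Sym2 W)), v ∈ q := by
  intro v
  simp [Sym2.mem_iff]
  try tauto

include hp in
lemma nda02 : ∀ q ∈ ({s(p 0, p 1), s(p 2, p 3)} : Finset (Sym2 W)), ¬ q.IsDiag := by
  intro q hq
  simp only [Finset.mem_insert, Finset.mem_singleton] at hq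
  rcases hq with rfl | rfl <;> simp [Sym2.mk_isDiag_iff, hp.eq_iff]

include hp in
lemma disja02 : ∀ q ∈ ({s(p 0, p 1), s(p 2, p 3)} : Finset (Sym2 W)), ∀ q' ∈ ({s(p 0, p 1), s(p 2, p 3)} : Finset (Sym2 W)), ∀ v, v ∈ q → v ∈ q' → q = q' := by
  intro q hq q' hq' v hv hv'
  simp only [Finset.mem_insert, Finset.mem_singleton] at hq hq'
  rcases hq with rfl | rfl <;> rcases hq' with rfl | rfl <;>
    simp only [Sym2.mem_iff] at hv hv' <;>
    rcases hv with rfl | rfl <;> simp_all [hp.eq_iff]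

lemma cova02 : ∀ v : W, v ∈ ({p 0, p 1, p 2, p 3} : Finset W) ↔ ∃ q ∈ ({s(p 0, p 1), s(p 2, p 3)} : Finset (Sym2 W)), v ∈ q := by
  intro v
  simp [Sym2.mem_iff]
  try tauto

include hp in
lemma nda13 : ∀ q ∈ ({s(p 1, p 2), s(p 3, p 0)} : Finset (Sym2 W)), ¬ q.IsDiag := by
  intro q hq
  simp only [Finset.mem_insert, Finset.mem_singleton] at hq
  rcases hq with rfl | rfl <;> simp [Sym2.mk_isDiag_iff, hp.eq_iff]

include hp in
lemma disja13 : ∀ q ∈ ({s(p 1, p 2), s(p 3, p 0)} : Finset (Sym2 W)), ∀ q' ∈ ({s(p 1, p 2), s(p 3, p 0)} : Finset (Sym2 W)), ∀ v, v ∈ q → v ∈ q' → q = q' := by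
  intro q hq q' hq' v hv hv'
  simp only [Finset.mem_insert, Finset.mem_singleton] at hq hq'
  rcases hq with rfl | rfl <;> rcases hq' with rfl | rfl <;>
    simp only [Sym2.mem_iff] at hv hv' <;>
    rcases hv with rfl | rfl <;> simp_all [hp.eq_iff]

lemma cova13 : ∀ v : W, v ∈ ({p 0, p 1, p 2, p 3} : Finset W) ↔ ∃ q ∈ ({s(p 1, p 2), s(p 3, p 0)} : Finset (Sym2 W)), v ∈ q := by
  intro v
  simp [Sym2.mem_iff]
  try tauto

end Configs

end UR

open UR in
/-- urban renewal.  Let the "before" graph `H` have vertex set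
`{a,b,c,d} ⊔ W` (we write `a,b,c,d` as `Sum.inl 0, …, Sum.inl 3`), where the square
`a-b-c-d-a` has weight-1 edges, the only edges from `{a,b,c,d}` to the rest are the
four weight-1 pendant edges `aa', bb', cc', dd'` with `a' = p 0, …, d' = p 3`, and
the rest of the graph carries weights `wrest`.  Let the "after" graph `H'` on `W` be
obtained by contracting the pendant edges and replacing the square by edges of
weight `1/2` on `a',b',c',d'` (weights of parallel edges add).  Then the weighted
sum of perfect matchings of `H` is twice that of `H'`. -/
theorem stmt6 {W : Type} [Fintype W] (wrest : Sym2 W → ℝ)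
    (p : Fin 4 → W) (hp : Function.Injective p)
    (wB : Sym2 (Fin 4 ⊕ W) → ℝ) (wA : Sym2 W → ℝ)
    (hsq : ∀ i : Fin 4, wB s(Sum.inl i, Sum.inl (i + 1)) = 1)
    (hdiag1 : wB s(Sum.inl 0, Sum.inl 2) = 0)
    (hdiag2 : wB s(Sum.inl 1, Sum.inl 3) = 0)
    (hpend : ∀ i : Fin 4, wB s(Sum.inl i, Sum.inr (p i)) = 1)
    (hnopend : ∀ (i : Fin 4) (v : W), v ≠ p i → wB s(Sum.inl i, Sum.inr v) = 0)
    (hrest : ∀ v v' : W, wB s(Sum.inr v, Sum.inr v') = wrest s(v, v'))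
    (hAsq : ∀ i : Fin 4, wA s(p i, p (i + 1)) = wrest s(p i, p (i + 1)) + 1 / 2)
    (hAother : ∀ s : Sym2 W, (∀ i : Fin 4, s ≠ s(p i, p (i + 1))) → wA s = wrest s) :
    matchSum wB = 2 * matchSum wA := by
  have hq01 : wB s(Sum.inl 0, Sum.inl 1) = 1 := by have := hsq 0; norm_num at this; exact this
  have hq12 : wB s(Sum.inl 1, Sum.inl 2) = 1 := by have := hsq 1; norm_num at this; exact this
  have hq23 : wB s(Sum.inl 2, Sum.inl 3) = 1 := by have := hsq 2; norm_num at this; exact this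
  have hq03 : wB s(Sum.inl 0, Sum.inl 3) = 1 := by
    have := hsq 3; norm_num at this; rwa [Sym2.eq_swap]
  have hprodA : ∏ q ∈ UR.FA (W := W), wB q = 1 := by
    simp [UR.FA, Finset.prod_insert, Finset.mem_insert, Finset.mem_singleton,
      Sym2.eq_iff, hp.eq_iff, hq01, hq23]
  have cA : (∑ M : {M : Finset (Sym2 (Fin 4 ⊕ W)) // IsPerfectPairing M},
      (if UR.FA ⊆ M.1 then ∏ q ∈ M.1, wB q else 0)) = UR.Nsub wrest (∅ : Finset W) := by
    have conv : ∀ M : {M : Finset (Sym2 (Fin 4 ⊕ W)) // IsPerfectPairing M},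
        (if UR.FA ⊆ M.1 then ∏ q ∈ M.1, wB q else 0)
        = (if UR.FA ⊆ M.1 then ∏ q ∈ M.1 \ UR.FA, wB q else 0) := by
      intro M
      by_cases h : UR.FA ⊆ M.1
      · rw [if_pos h, if_pos h, ← Finset.prod_sdiff h, hprodA, mul_one]
      · rw [if_neg h, if_neg h]
    rw [Finset.sum_congr rfl (fun M _ => conv M)]
    exact UR.config_step p wB wrest hrest _ _ UR.ndA (UR.disjA p hp) UR.covA
  have hprodB : ∏ q ∈ UR.FB (W := W), wB q = 1 := by
    simp [UR.FB, Finset.prod_insert, Finset.mem_insert, Finset.mem_singleton,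
      Sym2.eq_iff, hp.eq_iff, hq03, hq12]
  have cB : (∑ M : {M : Finset (Sym2 (Fin 4 ⊕ W)) // IsPerfectPairing M},
      (if UR.FB ⊆ M.1 then ∏ q ∈ M.1, wB q else 0)) = UR.Nsub wrest (∅ : Finset W) := by
    have conv : ∀ M : {M : Finset (Sym2 (Fin 4 ⊕ W)) // IsPerfectPairing M},
        (if UR.FB ⊆ M.1 then ∏ q ∈ M.1, wB q else 0)
        = (if UR.FB ⊆ M.1 then ∏ q ∈ M.1 \ UR.FB, wB q else 0) := by
      intro M
      by_cases h : UR.FB ⊆ M.1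
      · rw [if_pos h, if_pos h, ← Finset.prod_sdiff h, hprodB, mul_one]
      · rw [if_neg h, if_neg h]
    rw [Finset.sum_congr rfl (fun M _ => conv M)]
    exact UR.config_step p wB wrest hrest _ _ UR.ndB (UR.disjB p hp) UR.covB
  have hprodC : ∏ q ∈ UR.FC p (W := W), wB q = 1 := by
    simp [UR.FC, Finset.prod_insert, Finset.mem_insert, Finset.mem_singleton,
      Sym2.eq_iff, hp.eq_iff, hq01, hpend 2, hpend 3]
  have cC : (∑ M : {M : Finset (Sym2 (Fin 4 ⊕ W)) // IsPerfectPairing M},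
      (if UR.FC p ⊆ M.1 then ∏ q ∈ M.1, wB q else 0)) = UR.Nsub wrest ({p 2, p 3} : Finset W) := by
    have conv : ∀ M : {M : Finset (Sym2 (Fin 4 ⊕ W)) // IsPerfectPairing M},
        (if UR.FC p ⊆ M.1 then ∏ q ∈ M.1, wB q else 0)
        = (if UR.FC p ⊆ M.1 then ∏ q ∈ M.1 \ UR.FC p, wB q else 0) := by
      intro M
      by_cases h : UR.FC p ⊆ M.1
      · rw [if_pos h, if_pos h, ← Finset.prod_sdiff h, hprodC, mul_one]
      · rw [if_neg h, if_neg h]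
    rw [Finset.sum_congr rfl (fun M _ => conv M)]
    exact UR.config_step p wB wrest hrest _ _ (UR.ndC p) (UR.disjC p hp) (UR.covC p)
  have hprodD : ∏ q ∈ UR.FD p (W := W), wB q = 1 := by
    simp [UR.FD, Finset.prod_insert, Finset.mem_insert, Finset.mem_singleton,
      Sym2.eq_iff, hp.eq_iff, hq03, hpend 1, hpend 2]
  have cD : (∑ M : {M : Finset (Sym2 (Fin 4 ⊕ W)) // IsPerfectPairing M},
      (if UR.FD p ⊆ M.1 then ∏ q ∈ M.1, wB q else 0)) = UR.Nsub wrest ({p 1, p 2} : Finset W) := by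
    have conv : ∀ M : {M : Finset (Sym2 (Fin 4 ⊕ W)) // IsPerfectPairing M},
        (if UR.FD p ⊆ M.1 then ∏ q ∈ M.1, wB q else 0)
        = (if UR.FD p ⊆ M.1 then ∏ q ∈ M.1 \ UR.FD p, wB q else 0) := by
      intro M
      by_cases h : UR.FD p ⊆ M.1
      · rw [if_pos h, if_pos h, ← Finset.prod_sdiff h, hprodD, mul_one]
      · rw [if_neg h, if_neg h]
    rw [Finset.sum_congr rfl (fun M _ => conv M)]
    exact UR.config_step p wB wrest hrest _ _ (UR.ndD p) (UR.disjD p hp) (UR.covD p)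
  have hprodE : ∏ q ∈ UR.FE p (W := W), wB q = 1 := by
    simp [UR.FE, Finset.prod_insert, Finset.mem_insert, Finset.mem_singleton,
      Sym2.eq_iff, hp.eq_iff, hq12, hpend 0, hpend 3]
  have cE : (∑ M : {M : Finset (Sym2 (Fin 4 ⊕ W)) // IsPerfectPairing M},
      (if UR.FE p ⊆ M.1 then ∏ q ∈ M.1, wB q else 0)) = UR.Nsub wrest ({p 0, p 3} : Finset W) := by
    have conv : ∀ M : {M : Finset (Sym2 (Fin 4 ⊕ W)) // IsPerfectPairing M},
        (if UR.FE p ⊆ M.1 then ∏ q ∈ M.1, wB q else 0)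
        = (if UR.FE p ⊆ M.1 then ∏ q ∈ M.1 \ UR.FE p, wB q else 0) := by
      intro M
      by_cases h : UR.FE p ⊆ M.1
      · rw [if_pos h, if_pos h, ← Finset.prod_sdiff h, hprodE, mul_one]
      · rw [if_neg h, if_neg h]
    rw [Finset.sum_congr rfl (fun M _ => conv M)]
    exact UR.config_step p wB wrest hrest _ _ (UR.ndE p) (UR.disjE p hp) (UR.covE p)
  have hprodF : ∏ q ∈ UR.FF p (W := W), wB q = 1 := by
    simp [UR.FF, Finset.prod_insert, Finset.mem_insert, Finset.mem_singleton,
      Sym2.eq_iff, hp.eq_iff, hq23, hpend 0, hpend 1]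
  have cF : (∑ M : {M : Finset (Sym2 (Fin 4 ⊕ W)) // IsPerfectPairing M},
      (if UR.FF p ⊆ M.1 then ∏ q ∈ M.1, wB q else 0)) = UR.Nsub wrest ({p 0, p 1} : Finset W) := by
    have conv : ∀ M : {M : Finset (Sym2 (Fin 4 ⊕ W)) // IsPerfectPairing M},
        (if UR.FF p ⊆ M.1 then ∏ q ∈ M.1, wB q else 0)
        = (if UR.FF p ⊆ M.1 then ∏ q ∈ M.1 \ UR.FF p, wB q else 0) := by
      intro M
      by_cases h : UR.FF p ⊆ M.1
      · rw [if_pos h, if_pos h, ← Finset.prod_sdiff h, hprodF, mul_one]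
      · rw [if_neg h, if_neg h]
    rw [Finset.sum_congr rfl (fun M _ => conv M)]
    exact UR.config_step p wB wrest hrest _ _ (UR.ndF p) (UR.disjF p hp) (UR.covF p)
  have hprodG : ∏ q ∈ UR.FG p (W := W), wB q = 1 := by
    simp [UR.FG, Finset.prod_insert, Finset.mem_insert, Finset.mem_singleton,
      Sym2.eq_iff, hp.eq_iff, hpend 0, hpend 1, hpend 2, hpend 3]
  have cG : (∑ M : {M : Finset (Sym2 (Fin 4 ⊕ W)) // IsPerfectPairing M},
      (if UR.FG p ⊆ M.1 then ∏ q ∈ M.1, wB q else 0)) = UR.Nsub wrest ({p 0, p 1, p 2, p 3} : Finset W) := by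
    have conv : ∀ M : {M : Finset (Sym2 (Fin 4 ⊕ W)) // IsPerfectPairing M},
        (if UR.FG p ⊆ M.1 then ∏ q ∈ M.1, wB q else 0)
        = (if UR.FG p ⊆ M.1 then ∏ q ∈ M.1 \ UR.FG p, wB q else 0) := by
      intro M
      by_cases h : UR.FG p ⊆ M.1
      · rw [if_pos h, if_pos h, ← Finset.prod_sdiff h, hprodG, mul_one]
      · rw [if_neg h, if_neg h]
    rw [Finset.sum_congr rfl (fun M _ => conv M)]
    exact UR.config_step p wB wrest hrest _ _ (UR.ndG p) (UR.disjG p hp) (UR.covG p)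
  have hbefore : matchSum wB = UR.Nsub wrest (∅ : Finset W) + UR.Nsub wrest (∅ : Finset W)
      + UR.Nsub wrest ({p 2, p 3} : Finset W) + UR.Nsub wrest ({p 1, p 2} : Finset W)
      + UR.Nsub wrest ({p 0, p 3} : Finset W) + UR.Nsub wrest ({p 0, p 1} : Finset W)
      + UR.Nsub wrest ({p 0, p 1, p 2, p 3} : Finset W) := by
    have step : matchSum wB = ∑ M : {M : Finset (Sym2 (Fin 4 ⊕ W)) // IsPerfectPairing M},
        ((if UR.FA ⊆ M.1 then ∏ q ∈ M.1, wB q else 0)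
        + (if UR.FB ⊆ M.1 then ∏ q ∈ M.1, wB q else 0)
        + (if UR.FC p ⊆ M.1 then ∏ q ∈ M.1, wB q else 0)
        + (if UR.FD p ⊆ M.1 then ∏ q ∈ M.1, wB q else 0)
        + (if UR.FE p ⊆ M.1 then ∏ q ∈ M.1, wB q else 0)
        + (if UR.FF p ⊆ M.1 then ∏ q ∈ M.1, wB q else 0)
        + (if UR.FG p ⊆ M.1 then ∏ q ∈ M.1, wB q else 0)) :=
      Finset.sum_congr rfl (fun M _ => UR.key_before p wB hdiag1 hdiag2 hnopend M.2)
    rw [step, Finset.sum_add_distrib, Finset.sum_add_distrib, Finset.sum_add_distrib,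
      Finset.sum_add_distrib, Finset.sum_add_distrib, Finset.sum_add_distrib,
      cA, cB, cC, cD, cE, cF, cG]
  have ca0 : (∑ M : {M : Finset (Sym2 W) // IsPerfectPairing M},
      (if ({s(p 0, p 1)} : Finset (Sym2 W)) ⊆ M.1 then (1/2 : ℝ) * ∏ q ∈ M.1 \ ({s(p 0, p 1)} : Finset (Sym2 W)), wrest q else 0))
      = (1/2 : ℝ) * UR.Nsub wrest ({p 0, p 1} : Finset W) :=
    UR.config_step_after wrest _ _ _ (UR.nda0 p hp) (UR.disja0 p hp) (UR.cova0 p)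
  have ca1 : (∑ M : {M : Finset (Sym2 W) // IsPerfectPairing M},
      (if ({s(p 1, p 2)} : Finset (Sym2 W)) ⊆ M.1 then (1/2 : ℝ) * ∏ q ∈ M.1 \ ({s(p 1, p 2)} : Finset (Sym2 W)), wrest q else 0))
      = (1/2 : ℝ) * UR.Nsub wrest ({p 1, p 2} : Finset W) :=
    UR.config_step_after wrest _ _ _ (UR.nda1 p hp) (UR.disja1 p hp) (UR.cova1 p)
  have ca2 : (∑ M : {M : Finset (Sym2 W) // IsPerfectPairing M},
      (if ({s(p 2, p 3)} : Finset (Sym2 W)) ⊆ M.1 then (1/2 : ℝ) * ∏ q ∈ M.1 \ ({s(p 2, p 3)} : Finset (Sym2 W)), wrest q else 0))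
      = (1/2 : ℝ) * UR.Nsub wrest ({p 2, p 3} : Finset W) :=
    UR.config_step_after wrest _ _ _ (UR.nda2 p hp) (UR.disja2 p hp) (UR.cova2 p)
  have ca3 : (∑ M : {M : Finset (Sym2 W) // IsPerfectPairing M},
      (if ({s(p 3, p 0)} : Finset (Sym2 W)) ⊆ M.1 then (1/2 : ℝ) * ∏ q ∈ M.1 \ ({s(p 3, p 0)} : Finset (Sym2 W)), wrest q else 0))
      = (1/2 : ℝ) * UR.Nsub wrest ({p 0, p 3} : Finset W) :=
    UR.config_step_after wrest _ _ _ (UR.nda3 p hp) (UR.disja3 p hp) (UR.cova3 p)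
  have ca02 : (∑ M : {M : Finset (Sym2 W) // IsPerfectPairing M},
      (if ({s(p 0, p 1), s(p 2, p 3)} : Finset (Sym2 W)) ⊆ M.1 then (1/4 : ℝ) * ∏ q ∈ M.1 \ ({s(p 0, p 1), s(p 2, p 3)} : Finset (Sym2 W)), wrest q else 0))
      = (1/4 : ℝ) * UR.Nsub wrest ({p 0, p 1, p 2, p 3} : Finset W) :=
    UR.config_step_after wrest _ _ _ (UR.nda02 p hp) (UR.disja02 p hp) (UR.cova02 p)
  have ca13 : (∑ M : {M : Finset (Sym2 W) // IsPerfectPairing M},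
      (if ({s(p 1, p 2), s(p 3, p 0)} : Finset (Sym2 W)) ⊆ M.1 then (1/4 : ℝ) * ∏ q ∈ M.1 \ ({s(p 1, p 2), s(p 3, p 0)} : Finset (Sym2 W)), wrest q else 0))
      = (1/4 : ℝ) * UR.Nsub wrest ({p 0, p 1, p 2, p 3} : Finset W) :=
    UR.config_step_after wrest _ _ _ (UR.nda13 p hp) (UR.disja13 p hp) (UR.cova13 p)
  have c0 : (∑ M : {M : Finset (Sym2 W) // IsPerfectPairing M}, (∏ q ∈ M.1, wrest q)) = UR.Nsub wrest (∅ : Finset W) := by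
    have conv : ∀ M : {M : Finset (Sym2 W) // IsPerfectPairing M},
        (∏ q ∈ M.1, wrest q)
        = (if (∅ : Finset (Sym2 W)) ⊆ M.1 then (1 : ℝ) * ∏ q ∈ M.1 \ (∅ : Finset (Sym2 W)), wrest q else 0) := by
      intro M
      simp
    rw [Finset.sum_congr rfl (fun M _ => conv M)]
    have := UR.config_step_after wrest (∅ : Finset (Sym2 W)) (∅ : Finset W) 1
      (by simp) (by simp) (by simp)
    rw [this, one_mul]
  have hafter : matchSum wA = UR.Nsub wrest (∅ : Finset W)
      + (1/2 : ℝ) * UR.Nsub wrest ({p 0, p 1} : Finset W)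
      + (1/2 : ℝ) * UR.Nsub wrest ({p 1, p 2} : Finset W)
      + (1/2 : ℝ) * UR.Nsub wrest ({p 2, p 3} : Finset W)
      + (1/2 : ℝ) * UR.Nsub wrest ({p 0, p 3} : Finset W)
      + (1/4 : ℝ) * UR.Nsub wrest ({p 0, p 1, p 2, p 3} : Finset W)
      + (1/4 : ℝ) * UR.Nsub wrest ({p 0, p 1, p 2, p 3} : Finset W) := by
    have step : matchSum wA = ∑ M : {M : Finset (Sym2 W) // IsPerfectPairing M},
        ((∏ q ∈ M.1, wrest q)
        + (if ({s(p 0, p 1)} : Finset (Sym2 W)) ⊆ M.1 then (1/2 : ℝ) * ∏ q ∈ M.1 \ ({s(p 0, p 1)} : Finset (Sym2 W)), wrest q else 0)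
        + (if ({s(p 1, p 2)} : Finset (Sym2 W)) ⊆ M.1 then (1/2 : ℝ) * ∏ q ∈ M.1 \ ({s(p 1, p 2)} : Finset (Sym2 W)), wrest q else 0)
        + (if ({s(p 2, p 3)} : Finset (Sym2 W)) ⊆ M.1 then (1/2 : ℝ) * ∏ q ∈ M.1 \ ({s(p 2, p 3)} : Finset (Sym2 W)), wrest q else 0)
        + (if ({s(p 3, p 0)} : Finset (Sym2 W)) ⊆ M.1 then (1/2 : ℝ) * ∏ q ∈ M.1 \ ({s(p 3, p 0)} : Finset (Sym2 W)), wrest q else 0)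
        + (if ({s(p 0, p 1), s(p 2, p 3)} : Finset (Sym2 W)) ⊆ M.1 then (1/4 : ℝ) * ∏ q ∈ M.1 \ ({s(p 0, p 1), s(p 2, p 3)} : Finset (Sym2 W)), wrest q else 0)
        + (if ({s(p 1, p 2), s(p 3, p 0)} : Finset (Sym2 W)) ⊆ M.1 then (1/4 : ℝ) * ∏ q ∈ M.1 \ ({s(p 1, p 2), s(p 3, p 0)} : Finset (Sym2 W)), wrest q else 0)) :=
      Finset.sum_congr rfl (fun M _ => UR.key_after p hp wrest wA hAsq hAother M.2)
    rw [step, Finset.sum_add_distrib, Finset.sum_add_distrib, Finset.sum_add_distrib,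
      Finset.sum_add_distrib, Finset.sum_add_distrib, Finset.sum_add_distrib,
      c0, ca0, ca1, ca2, ca3, ca02, ca13]
  rw [hbefore, hafter]
  ring
end

section
/- Define R = ∑_{k=0}^∞ C(2k,k)² (1/5)^{2k}. Then R = ∫₀¹∫₀¹ dx dy / (1 − (2/5)cos(πx) − (2/5)cos(πy)), and R = (2/π)·K(4/5), where K is Legendre's complete elliptic integral of the first kind. -/
/-!
For every `|k| < 1`, both `(2/π) K(k)` and `∫₀¹∫₀¹ dx dy / (1 - (k/2) cos πx - (k/2) cos πy)`
equal `∑ (C(2n,n)/4ⁿ)² k²ⁿ`, which is `R` at `k = 4/5`. For the elliptic integral, expand `1/√(1 - k² sin²θ)` by the binomial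
series, whose coefficients are `C(2n,n)/4ⁿ`, and integrate term by term with Wallis' formula
`∫₀^{π/2} sin²ⁿ = (π/2) C(2n,n)/4ⁿ`. For the double integral, expand the integrand as the geometric
series in `(k/2)(cos πx + cos πy)`; by the binomial theorem and Wallis' formula only even powers
survive, and the moment of order `2m` collapses by Vandermonde's identity `∑ C(m,j)² = C(2m,m)`.
-/

/-- `R = ∑_{k=0}^∞ C(2k,k)² (1/5)^{2k}`, the expected number of visits to the
starting point of the biased random walk. -/
noncomputable def Rconst : ℝ :=
  ∑' k : ℕ, ((Nat.choose (2 * k) k : ℝ)) ^ 2 * (1 / 5) ^ (2 * k)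

/-- Legendre's complete elliptic integral of the first kind,
`K(k) = ∫₀^{π/2} dθ / √(1 - k² sin²θ)`. -/
noncomputable def ellK (k : ℝ) : ℝ :=
  ∫ θ in (0 : ℝ)..(Real.pi / 2), 1 / Real.sqrt (1 - k ^ 2 * Real.sin θ ^ 2)

open Real Finset Nat Polynomial MeasureTheory intervalIntegral

noncomputable def scaledCentralBinom (n : ℕ) : ℝ := n.centralBinom / 4 ^ n

lemma scaledCentralBinom_nonneg (n : ℕ) : 0 ≤ scaledCentralBinom n := by
  unfold scaledCentralBinom; positivity

lemma scaledCentralBinom_le_one (n : ℕ) : scaledCentralBinom n ≤ 1 := by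
  rw [scaledCentralBinom, div_le_one (by positivity)]
  exact_mod_cast centralBinom_le_four_pow n

lemma scaledCentralBinom_succ (n : ℕ) :
    scaledCentralBinom (n + 1) = scaledCentralBinom n * ((2 * n + 1) / (2 * n + 2)) := by
  have h : ((n : ℝ) + 1) * (n + 1).centralBinom = 2 * (2 * n + 1) * n.centralBinom := by
    exact_mod_cast succ_mul_centralBinom_succ n
  unfold scaledCentralBinom
  field_simp
  rw [pow_succ]
  linear_combination 4 ^ n * 2 * h

lemma scaledCentralBinom_sq_mul_pow (n : ℕ) (x : ℝ) :
    scaledCentralBinom n ^ 2 * x ^ (2 * n) = ((2 * n).choose n : ℝ) ^ 2 * (x / 4) ^ (2 * n) := by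
  rw [scaledCentralBinom, centralBinom_eq_two_mul_choose, div_pow, div_pow, ← pow_mul, mul_comm n 2]
  field_simp

lemma ascPochhammer_eval_half (n : ℕ) :
    (ascPochhammer ℝ n).eval (1 / 2) = n ! * scaledCentralBinom n := by
  induction n with
  | zero => simp [scaledCentralBinom]
  | succ n ih =>
    rw [ascPochhammer_succ_eval, ih, scaledCentralBinom_succ, factorial_succ]
    push_cast
    field_simp
    ring

lemma ringChoose_half_add_sub_one (n : ℕ) :
    Ring.choose ((1 / 2 : ℝ) + n - 1) n = scaledCentralBinom n := by
  rw [Ring.choose_eq_smul, descPochhammer_smeval_eq_ascPochhammer, ascPochhammer_smeval_eq_eval,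
    show (1 / 2 : ℝ) + n - 1 - n + 1 = 1 / 2 by ring, ascPochhammer_eval_half, smul_eq_mul,
    inv_mul_cancel_left₀ (by positivity)]

theorem hasSum_scaledCentralBinom_mul_pow {t : ℝ} (ht : |t| < 1) :
    HasSum (fun n => scaledCentralBinom n * t ^ n) (1 / √(1 - t)) := by
  have h := (one_div_one_sub_rpow_hasFPowerSeriesOnBall_zero (1 / 2)).hasSum
    (y := t) (by simpa [enorm_eq_nnnorm, ← NNReal.coe_lt_coe] using ht)
  simp only [FormalMultilinearSeries.ofScalars_apply_eq, ringChoose_half_add_sub_one,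
    smul_eq_mul, zero_add] at h
  rwa [sqrt_eq_rpow]

lemma hasSum_intervalIntegral_of_norm_le {E : Type*} [NormedAddCommGroup E] [NormedSpace ℝ E]
    {F : ℕ → ℝ → E} {f : ℝ → E} {B : ℕ → ℝ} (a b : ℝ) (hF : ∀ n, Continuous (F n))
    (hFB : ∀ n x, ‖F n x‖ ≤ B n) (hB : Summable B) (hf : ∀ x, HasSum (fun n => F n x) (f x)) :
    HasSum (fun n => ∫ x in a..b, F n x) (∫ x in a..b, f x) :=
  hasSum_integral_of_dominated_convergence (fun n _ => B n)
    (fun n => (hF n).aestronglyMeasurable) (fun n => .of_forall fun x _ => hFB n x)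
    (.of_forall fun _ _ => hB) intervalIntegrable_const (.of_forall fun x _ => hf x)

lemma apply_two_mul_of_rec {I : ℕ → ℝ} (h : ∀ n : ℕ, I (n + 2) = (n + 1) / (n + 2) * I n)
    (m : ℕ) : I (2 * m) = I 0 * scaledCentralBinom m := by
  induction m with
  | zero => simp [scaledCentralBinom]
  | succ m ih =>
    rw [show 2 * (m + 1) = 2 * m + 2 by ring, h, ih, scaledCentralBinom_succ]
    push_cast
    ring

lemma apply_two_mul_add_one_of_rec {I : ℕ → ℝ} (h : ∀ n : ℕ, I (n + 2) = (n + 1) / (n + 2) * I n)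
    (h1 : I 1 = 0) (m : ℕ) : I (2 * m + 1) = 0 := by
  induction m with
  | zero => exact h1
  | succ m ih => rw [show 2 * (m + 1) + 1 = 2 * m + 1 + 2 by ring, h, ih, mul_zero]

lemma integral_sin_pow_two_mul (m : ℕ) :
    ∫ x in (0 : ℝ)..(π / 2), sin x ^ (2 * m) = π / 2 * scaledCentralBinom m := by
  simpa using apply_two_mul_of_rec (I := fun n => ∫ x in (0 : ℝ)..(π / 2), sin x ^ n)
    (fun n => by simp [integral_sin_pow]) m

lemma integral_cos_pi_mul_pow_two_mul (m : ℕ) :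
    ∫ x in (0 : ℝ)..1, cos (π * x) ^ (2 * m) = scaledCentralBinom m := by
  have h := apply_two_mul_of_rec (I := fun n => ∫ x in (0 : ℝ)..π, cos x ^ n)
    (fun n => by simp [integral_cos_pow]) m
  rw [integral_comp_mul_left (fun x => cos x ^ (2 * m)) pi_ne_zero]
  simp_all

lemma integral_cos_pi_mul_pow_of_odd {j : ℕ} (hj : Odd j) :
    ∫ x in (0 : ℝ)..1, cos (π * x) ^ j = 0 := by
  obtain ⟨m, rfl⟩ := hj
  rw [integral_comp_mul_left (fun x => cos x ^ (2 * m + 1)) pi_ne_zero]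
  simp [apply_two_mul_add_one_of_rec (I := fun n => ∫ x in (0 : ℝ)..π, cos x ^ n)
    (fun n => by simp [integral_cos_pow]) (by simp) m]

theorem hasSum_ellK {k : ℝ} (hk : |k| < 1) :
    HasSum (fun n => scaledCentralBinom n ^ 2 * k ^ (2 * n)) (2 / π * ellK k) := by
  have hk2 : k ^ 2 < 1 := by simpa [sq_abs] using pow_lt_one₀ (abs_nonneg k) hk two_ne_zero
  have hterm (θ : ℝ) : |k ^ 2 * sin θ ^ 2| ≤ k ^ 2 := by
    rw [abs_of_nonneg (by positivity)]
    exact mul_le_of_le_one_right (sq_nonneg k) (sin_sq_le_one θ)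
  have hFle (n : ℕ) (θ : ℝ) : ‖scaledCentralBinom n * (k ^ 2 * sin θ ^ 2) ^ n‖ ≤ (k ^ 2) ^ n := by
    rw [norm_mul, norm_pow, Real.norm_eq_abs, Real.norm_eq_abs,
      abs_of_nonneg (scaledCentralBinom_nonneg n)]
    calc _ ≤ 1 * (k ^ 2) ^ n := mul_le_mul (scaledCentralBinom_le_one n)
          (pow_le_pow_left₀ (abs_nonneg _) (hterm θ) n) (by positivity) zero_le_one
      _ = (k ^ 2) ^ n := one_mul _
  have hsum := hasSum_intervalIntegral_of_norm_le 0 (π / 2) (fun n => by fun_prop) hFle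
    (summable_geometric_of_lt_one (sq_nonneg k) hk2)
    (fun θ => hasSum_scaledCentralBinom_mul_pow ((hterm θ).trans_lt hk2))
  have hcoeff (n : ℕ) :
      2 / π * ∫ θ in (0 : ℝ)..(π / 2), scaledCentralBinom n * (k ^ 2 * sin θ ^ 2) ^ n =
        scaledCentralBinom n ^ 2 * k ^ (2 * n) := by
    simp_rw [mul_pow, ← pow_mul, intervalIntegral.integral_const_mul, integral_sin_pow_two_mul]
    field_simp
  unfold ellK
  simpa only [hcoeff] using hsum.mul_left (2 / π)

lemma integral_integral_add_pow {f g : ℝ → ℝ} (hf : Continuous f) (hg : Continuous g)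
    (a b c d : ℝ) (n : ℕ) :
    ∫ x in a..b, ∫ y in c..d, (f x + g y) ^ n =
      ∑ i ∈ range (n + 1), n.choose i * (∫ x in a..b, f x ^ i) * ∫ y in c..d, g y ^ (n - i) := by
  have inner (x : ℝ) : ∫ y in c..d, (f x + g y) ^ n =
      ∑ i ∈ range (n + 1), n.choose i * f x ^ i * ∫ y in c..d, g y ^ (n - i) := by
    simp_rw [add_pow]
    rw [integral_finsetSum fun i _ => (by fun_prop : Continuous _).intervalIntegrable _ _]
    refine sum_congr rfl fun i _ => ?_
    rw [← intervalIntegral.integral_const_mul]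
    congr 1 with y
    ring
  simp_rw [inner]
  rw [integral_finsetSum fun i _ => (by fun_prop : Continuous _).intervalIntegrable _ _]
  refine sum_congr rfl fun i _ => ?_
  rw [intervalIntegral.integral_mul_const, intervalIntegral.integral_const_mul]

lemma sum_range_two_mul_add_one_of_odd {M : Type*} [AddCommMonoid M] {f : ℕ → M}
    (hf : ∀ j, f (2 * j + 1) = 0) (m : ℕ) :
    ∑ i ∈ range (2 * m + 1), f i = ∑ j ∈ range (m + 1), f (2 * j) := by
  induction m with
  | zero => simp
  | succ m ih =>
    rw [show 2 * (m + 1) + 1 = 2 * m + 1 + 1 + 1 by ring, sum_range_succ, sum_range_succ, ih, hf,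
      add_zero, sum_range_succ (fun j => f (2 * j)) (m + 1),
      show 2 * m + 1 + 1 = 2 * (m + 1) by ring]

lemma choose_mul_centralBinom_mul_centralBinom {m j : ℕ} (h : j ≤ m) :
    ((2 * m).choose (2 * j) : ℝ) * j.centralBinom * (m - j).centralBinom =
      m.centralBinom * m.choose j ^ 2 := by
  simp only [centralBinom_eq_two_mul_choose]
  rw [cast_choose ℝ (by omega : 2 * j ≤ 2 * m), cast_choose ℝ (by omega : j ≤ 2 * j),
    cast_choose ℝ (by omega : m - j ≤ 2 * (m - j)), cast_choose ℝ (by omega : m ≤ 2 * m),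
    cast_choose ℝ h, show 2 * m - 2 * j = 2 * (m - j) by omega, show 2 * j - j = j by omega,
    show 2 * (m - j) - (m - j) = m - j by omega, show 2 * m - m = m by omega]
  field_simp

lemma integral_integral_cos_add_cos_pow_two_mul_add_one (m : ℕ) :
    ∫ x in (0 : ℝ)..1, ∫ y in (0 : ℝ)..1, (cos (π * x) + cos (π * y)) ^ (2 * m + 1) = 0 := by
  rw [integral_integral_add_pow (by fun_prop) (by fun_prop)]
  refine sum_eq_zero fun i hi => ?_
  obtain ⟨j, rfl⟩ | hodd := Nat.even_or_odd i
  · have : Odd (2 * m + 1 - (j + j)) := ⟨m - j, by have := mem_range.mp hi; omega⟩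
    simp [integral_cos_pi_mul_pow_of_odd this]
  · simp [integral_cos_pi_mul_pow_of_odd hodd]

lemma integral_integral_cos_add_cos_pow_two_mul (m : ℕ) :
    ∫ x in (0 : ℝ)..1, ∫ y in (0 : ℝ)..1, (cos (π * x) + cos (π * y)) ^ (2 * m) =
      4 ^ m * scaledCentralBinom m ^ 2 := by
  rw [integral_integral_add_pow (by fun_prop) (by fun_prop), sum_range_two_mul_add_one_of_odd
    fun j => by simp [integral_cos_pi_mul_pow_of_odd (odd_two_mul_add_one j)]]
  have hterm : ∀ j ∈ range (m + 1), ((2 * m).choose (2 * j) : ℝ) *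
      (∫ x in (0 : ℝ)..1, cos (π * x) ^ (2 * j)) *
        (∫ y in (0 : ℝ)..1, cos (π * y) ^ (2 * m - 2 * j)) =
      m.centralBinom / 4 ^ m * m.choose j ^ 2 := by
    intro j hj
    have hjm : j ≤ m := Nat.lt_succ_iff.mp (mem_range.mp hj)
    have h4 : (4 : ℝ) ^ m = 4 ^ j * 4 ^ (m - j) := by rw [← pow_add, Nat.add_sub_cancel' hjm]
    rw [show 2 * m - 2 * j = 2 * (m - j) by omega, integral_cos_pi_mul_pow_two_mul,
      integral_cos_pi_mul_pow_two_mul, scaledCentralBinom, scaledCentralBinom, h4]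
    field_simp
    linear_combination choose_mul_centralBinom_mul_centralBinom hjm
  rw [sum_congr rfl hterm, ← mul_sum]
  have hvandermonde : ∑ j ∈ range (m + 1), (m.choose j : ℝ) ^ 2 = m.centralBinom := by
    exact_mod_cast (sum_range_choose_sq m).trans (centralBinom_eq_two_mul_choose m).symm
  rw [hvandermonde, scaledCentralBinom]
  field_simp

lemma abs_half_mul_cos_add_cos_le (k x y : ℝ) : |k / 2 * (cos x + cos y)| ≤ |k| := by
  have h : |cos x + cos y| ≤ 2 :=
    (abs_add_le _ _).trans (by linarith [abs_cos_le_one x, abs_cos_le_one y])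
  rw [abs_mul, abs_div, abs_two]
  nlinarith [abs_nonneg k]

theorem hasSum_integral_integral_inv {k : ℝ} (hk : |k| < 1) :
    HasSum (fun n => scaledCentralBinom n ^ 2 * k ^ (2 * n))
      (∫ x in (0 : ℝ)..1, ∫ y in (0 : ℝ)..1,
        1 / (1 - k / 2 * cos (π * x) - k / 2 * cos (π * y))) := by
  set F : ℕ → ℝ → ℝ → ℝ := fun n x y => (k / 2 * (cos (π * x) + cos (π * y))) ^ n with hF
  have hFle (n : ℕ) (x y : ℝ) : ‖F n x y‖ ≤ |k| ^ n := by
    rw [norm_pow, Real.norm_eq_abs]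
    exact pow_le_pow_left₀ (abs_nonneg _) (abs_half_mul_cos_add_cos_le _ _ _) n
  have hgeom (x y : ℝ) :
      HasSum (fun n => F n x y) (1 / (1 - k / 2 * cos (π * x) - k / 2 * cos (π * y))) := by
    rw [show 1 - k / 2 * cos (π * x) - k / 2 * cos (π * y) =
      1 - k / 2 * (cos (π * x) + cos (π * y)) by ring, one_div]
    exact hasSum_geometric_of_abs_lt_one ((abs_half_mul_cos_add_cos_le _ _ _).trans_lt hk)
  have hB : Summable (fun n => |k| ^ n) := summable_geometric_of_lt_one (abs_nonneg k) hk
  have hsum := hasSum_intervalIntegral_of_norm_le 0 1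
    (fun n => continuous_parametric_intervalIntegral_of_continuous' (by fun_prop) 0 1)
    (fun n x => (norm_integral_le_of_norm_le_const (fun y _ => hFle n x y)).trans_eq (by simp)) hB
    (fun x => hasSum_intervalIntegral_of_norm_le 0 1 (fun n => by fun_prop) (hFle · x) hB (hgeom x))
  have hmoment (n : ℕ) : ∫ x in (0 : ℝ)..1, ∫ y in (0 : ℝ)..1, F n x y =
      (k / 2) ^ n * ∫ x in (0 : ℝ)..1, ∫ y in (0 : ℝ)..1, (cos (π * x) + cos (π * y)) ^ n := by
    simp only [hF, mul_pow, intervalIntegral.integral_const_mul]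
  have hodd (n : ℕ) (hn : n ∉ Set.range (2 * ·)) :
      ∫ x in (0 : ℝ)..1, ∫ y in (0 : ℝ)..1, F n x y = 0 := by
    obtain ⟨m, rfl⟩ : Odd n :=
      Nat.not_even_iff_odd.mp fun ⟨m, hm⟩ => hn ⟨m, show 2 * m = n by omega⟩
    rw [hmoment, integral_integral_cos_add_cos_pow_two_mul_add_one, mul_zero]
  have heven : (fun n => ∫ x in (0 : ℝ)..1, ∫ y in (0 : ℝ)..1, F n x y) ∘ (2 * ·) =
      fun m => scaledCentralBinom m ^ 2 * k ^ (2 * m) := by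
    ext m
    rw [Function.comp_apply, hmoment, integral_integral_cos_add_cos_pow_two_mul, pow_mul, pow_mul,
      div_pow, show (2 : ℝ) ^ 2 = 4 by norm_num, div_pow]
    field_simp
  rwa [← (mul_right_injective₀ (two_ne_zero' ℕ)).hasSum_iff hodd, heven] at hsum

/-- `R = ∫₀¹∫₀¹ dx dy / (1 - (2/5)cos(πx) - (2/5)cos(πy))`
and `R = (2/π) K(4/5)`. -/
theorem stmt13 :
    Rconst = (∫ x in (0 : ℝ)..1, ∫ y in (0 : ℝ)..1,
        1 / (1 - (2 / 5) * Real.cos (Real.pi * x) - (2 / 5) * Real.cos (Real.pi * y))) ∧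
    Rconst = (2 / Real.pi) * ellK (4 / 5) := by
  have hk : |(4 / 5 : ℝ)| < 1 := by norm_num [abs_of_pos]
  have hI := hasSum_integral_integral_inv hk
  have hK := hasSum_ellK hk
  simp only [scaledCentralBinom_sq_mul_pow, show (4 / 5 : ℝ) / 4 = 1 / 5 by norm_num] at hI hK
  rw [show (4 / 5 : ℝ) / 2 = 2 / 5 by norm_num] at hI
  exact ⟨hI.tsum_eq, hK.tsum_eq⟩
end

section
/- Matrix Tree Theorem for directed weighted graphs: let G be a finite directed graph on n vertices with nonnegative edge weights, and let L be the n×n matrix with L_{v,w} = −(weight of edge from v to w) for v ≠ w and L_{v,v} = sum of the weights of edges leaving v. Then for any vertex r, the determinant of the matrix obtained from L by deleting row r and column r equals the sum of the weights of the arborescences of G rooted at r. -/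
/-!
Give every vertex `v ≠ r` a choice `p v` of outgoing edge. Row `v` of the reduced Laplacian is
the `w`-weighted sum, over the edges `e` leaving `v`, of the row `δ_v - δ_{head e}` (where
`δ_r := 0`), so multilinearity expands the determinant into a sum over all choices `p` of
`∏ w (p v)` times the determinant of `1 - A_p`, with `A_p` the successor matrix of `p`. If every
vertex reaches `r`, the distance to `r` strictly drops along each edge, so `A_p` is strictly
triangular for this ranking and `det (1 - A_p) = 1`. Otherwise the indicator of the vertices
that never reach `r` is constant along edges, hence a nonzero kernel vector of `1 - A_p`.
-/

attribute [local instance] Classical.propDecidable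

/-- The (negative) Laplacian of a finite weighted directed multigraph:
`L v v = ` sum of the weights of the edges leaving `v`, and for `v ≠ v'`,
`L v v' = -(total weight of the edges from v to v')`. -/
noncomputable def dirLaplacian {V E : Type} [Fintype V] [Fintype E]
    (tail head : E → V) (w : E → ℝ) : Matrix V V ℝ :=
  fun i j =>
    if i = j then ∑ e ∈ Finset.univ.filter (fun e => tail e = i), w e
    else -(∑ e ∈ Finset.univ.filter (fun e => tail e = i ∧ head e = j), w e)

open Finset Matrix Relation

theorem Matrix.det_of_sum_smul_rows {n ι R : Type*} [Fintype n] [DecidableEq n] [Fintype ι]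
    [CommRing R] (c : n → ι → R) (u : n → ι → n → R) :
    (of fun i => ∑ k, c i k • u i k).det
      = ∑ x : n → ι, (∏ i, c i (x i)) * (of fun i => u i (x i)).det := by
  change detRowAlternating.toMultilinearMap (fun i => ∑ k, c i k • u i k) = _
  simp only [MultilinearMap.map_sum, MultilinearMap.map_smul_univ, smul_eq_mul]
  rfl

theorem Matrix.det_one_sub_eq_one_of_strictLowerTriangular {n α R : Type*} [Fintype n]
    [DecidableEq n] [CommRing R] [LinearOrder α] (A : Matrix n n R) (b : n → α)
    (hA : ∀ i j, A i j ≠ 0 → b j < b i) :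
    (1 - A).det = 1 := by
  have hA' : ∀ i j, ¬ b j < b i → A i j = 0 := fun i j => not_imp_comm.mp (hA i j)
  have hBT : (1 - A)ᵀ.BlockTriangular b := fun i j hij => by
    have hji : j ≠ i := by rintro rfl; exact lt_irrefl _ hij
    simp [hji, hA' j i (lt_asymm hij)]
  have hblock : ∀ k, (1 - A)ᵀ.toSquareBlock b k = 1 := fun k => by
    ext i j
    have : A j i = 0 := hA' j i (by simp [i.2, j.2])
    simp [toSquareBlock_def, one_apply, this, Subtype.ext_iff]
  rw [← det_transpose, hBT.det, prod_congr rfl fun k _ => by rw [hblock k, det_one],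
    prod_const_one]

noncomputable section Successor

variable {V : Type*} {r : V}

def succRel (s : {v // v ≠ r} → V) (a b : V) : Prop :=
  ∃ h : a ≠ r, s ⟨a, h⟩ = b

def succFun (s : {v // v ≠ r} → V) (v : V) : V :=
  if h : v = r then r else s ⟨v, h⟩

theorem succFun_of_ne (s : {v // v ≠ r} → V) {v : V} (hv : v ≠ r) :
    succFun s v = s ⟨v, hv⟩ :=
  dif_neg hv

theorem exists_iterate_succFun_eq_of_reflTransGen {s : {v // v ≠ r} → V} {v : V}
    (h : ReflTransGen (succRel s) v r) : ∃ n, (succFun s)^[n] v = r := by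
  induction h using ReflTransGen.head_induction_on with
  | refl => exact ⟨0, rfl⟩
  | head hstep _ ih =>
    obtain ⟨ha, rfl⟩ := hstep
    obtain ⟨n, hn⟩ := ih
    exact ⟨n + 1, by rw [Function.iterate_succ_apply, succFun_of_ne s ha, hn]⟩

theorem reflTransGen_succRel_iff_of_ne {s : {v // v ≠ r} → V} {v : V} (hv : v ≠ r) :
    ReflTransGen (succRel s) v r ↔ ReflTransGen (succRel s) (s ⟨v, hv⟩) r := by
  refine ⟨fun h => ?_, ReflTransGen.head ⟨hv, rfl⟩⟩
  rcases h.cases_head with rfl | ⟨c, ⟨_, rfl⟩, hc⟩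
  · exact absurd rfl hv
  · exact hc

variable [Fintype V] (R : Type*) [CommRing R]

def succMat (s : {v // v ≠ r} → V) : Matrix {v // v ≠ r} {v // v ≠ r} R :=
  1 - of fun v j => if s v = j.1 then 1 else 0

theorem det_succMat_of_reachable {s : {v // v ≠ r} → V}
    (h : ∀ v, ReflTransGen (succRel s) v r) : (succMat R s).det = 1 := by
  have hiter : ∀ v, ∃ n, (succFun s)^[n] v = r :=
    fun v => exists_iterate_succFun_eq_of_reflTransGen (h v)
  let d : V → ℕ := fun v => Nat.find (hiter v)
  have hd : ∀ v : {v // v ≠ r}, d (s v) < d v := by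
    intro v
    have hpos : 0 < d v :=
      Nat.pos_of_ne_zero fun h0 => v.2 (by simpa [d, h0] using Nat.find_spec (hiter v))
    have hstep : (succFun s)^[d v - 1] (s v) = r := by
      have : (succFun s)^[d v] v = r := Nat.find_spec (hiter v)
      rwa [← Nat.sub_add_cancel hpos, Function.iterate_succ_apply, succFun_of_ne s v.2] at this
    exact (Nat.find_min' _ hstep).trans_lt (Nat.sub_lt hpos one_pos)
  refine det_one_sub_eq_one_of_strictLowerTriangular _ (fun v => d v.1) fun v j hvj => ?_
  have hsv : s v = j.1 := by_contra fun hne => hvj (by simp [hne])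
  simpa [← hsv] using hd v

theorem det_succMat_of_not_reachable {s : {v // v ≠ r} → V}
    (h : ¬ ∀ v, ReflTransGen (succRel s) v r) : (succMat R s).det = 0 := by
  obtain ⟨v₀, hv₀⟩ := not_forall.mp h
  let x : V → R := fun v => if ReflTransGen (succRel s) v r then 0 else 1
  have hxr : x r = 0 := if_pos ReflTransGen.refl
  have hx : (succMat R s) *ᵥ (fun v => x v.1) = 0 := by
    funext v
    have hsum : ∑ j : {v // v ≠ r}, (if s v = j.1 then (1 : R) else 0) * x j.1 = x (s v) := by
      by_cases hsr : s v = r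
      · rw [hsr, hxr]
        exact sum_eq_zero fun j _ => by simp [Ne.symm j.2]
      · refine (sum_eq_single ⟨s v, hsr⟩ (fun j _ hj => ?_) (by simp)).trans (by simp)
        have : s v ≠ j.1 := fun h => hj (Subtype.ext h.symm)
        simp [this]
    rw [succMat, sub_mulVec, one_mulVec, Pi.sub_apply]
    simp only [mulVec, dotProduct, of_apply, hsum]
    simp [x, reflTransGen_succRel_iff_of_ne v.2]
  have hx₀ : x v₀ = 1 := if_neg hv₀
  have hv₀r : v₀ ≠ r := by rintro rfl; exact hv₀ ReflTransGen.refl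
  exact det_eq_zero_of_mulVec_eq_zero_of_mem_nonZeroDivisors (i := ⟨v₀, hv₀r⟩) hx
    (by simp [hx₀, one_mem])

end Successor

section Laplacian

variable {V E : Type} [Fintype V] (tail head : E → V) (w : E → ℝ)

-- `succMat ℝ (fun _ => head e) v` is the row `δ_v - δ_{head e}` of an edge `e` leaving `v`.
theorem dirLaplacian_submatrix_eq_sum [Fintype E] (hloop : ∀ e, tail e ≠ head e) (r : V) :
    (dirLaplacian tail head w).submatrix (Subtype.val : {v // v ≠ r} → V) Subtype.val
      = of fun v =>
        ∑ e, (if tail e = v.1 then w e else 0) • succMat ℝ (fun _ => head e) v := by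
  ext v j
  simp only [submatrix_apply, of_apply, Finset.sum_apply, Pi.smul_apply, smul_eq_mul, succMat,
    Matrix.sub_apply, one_apply, dirLaplacian]
  by_cases hvj : v = j
  · subst hvj
    rw [if_pos rfl, sum_filter]
    refine sum_congr rfl fun e _ => ?_
    by_cases ht : tail e = v.1
    · have hh : head e ≠ v.1 := ht ▸ (hloop e).symm
      simp [ht, hh]
    · simp [ht]
  · rw [if_neg (Subtype.coe_ne_coe.mpr hvj), sum_filter, ← sum_neg_distrib]
    refine sum_congr rfl fun e _ => ?_
    by_cases ht : tail e = v.1 <;> simp [ht, hvj]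

theorem weight_mul_det_succMat {r : V} (p : {v // v ≠ r} → E) :
    (∏ v, if tail (p v) = v.1 then w (p v) else 0) * (succMat ℝ (head ∘ p)).det
      = if (∀ v, tail (p v) = v.1) ∧ ∀ v, ReflTransGen (succRel (head ∘ p)) v r
        then ∏ v, w (p v) else 0 := by
  by_cases htail : ∀ v, tail (p v) = v.1
  · rw [prod_congr rfl fun v _ => if_pos (htail v)]
    by_cases hreach : ∀ v, ReflTransGen (succRel (head ∘ p)) v r
    · rw [det_succMat_of_reachable ℝ hreach, mul_one, if_pos ⟨htail, hreach⟩]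
    · rw [det_succMat_of_not_reachable ℝ hreach, mul_zero, if_neg fun h => hreach h.2]
  · obtain ⟨v, hv⟩ := not_forall.mp htail
    rw [prod_eq_zero (mem_univ v) (if_neg hv), zero_mul, if_neg fun h => hv (h.1 v)]

end Laplacian

theorem stmt19_general {V E : Type} [Fintype V] [Fintype E]
    (tail head : E → V) (w : E → ℝ)
    (hloop : ∀ e, tail e ≠ head e) (r : V) :
    ((dirLaplacian tail head w).submatrix
        (Subtype.val : {v : V // v ≠ r} → V)
        (Subtype.val : {v : V // v ≠ r} → V)).det
    = ∑ T : {p : {v : V // v ≠ r} → E //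
        (∀ v, tail (p v) = v.1) ∧
        ∀ v : V, Relation.ReflTransGen
          (fun a b => ∃ h : a ≠ r, head (p ⟨a, h⟩) = b) v r},
      ∏ v : {v : V // v ≠ r}, w (T.1 v) := by
  rw [dirLaplacian_submatrix_eq_sum tail head w hloop r, det_of_sum_smul_rows]
  refine (sum_congr rfl fun p _ => weight_mul_det_succMat tail head w p).trans ?_
  rw [← sum_filter]
  exact sum_subtype _ (fun p => by rw [mem_filter]; exact and_iff_right (mem_univ p)) _

/-- Matrix Tree Theorem for directed weighted graphs.  Let `G`
be a finite directed graph (no self-loops) with nonnegative edge weights and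
Laplacian matrix `L` as above.  For any vertex `r`, the determinant of the matrix
obtained from `L` by deleting row `r` and column `r` equals the sum of the weights
of the arborescences of `G` rooted at `r` (an arborescence rooted at `r` gives every
vertex `v ≠ r` exactly one outgoing edge, and from every vertex the resulting path
reaches `r`; its weight is the product of the weights of its edges). -/
theorem stmt19 {V E : Type} [Fintype V] [Fintype E]
    (tail head : E → V) (w : E → ℝ) (hw : ∀ e, 0 ≤ w e)
    (hloop : ∀ e, tail e ≠ head e) (r : V) :
    ((dirLaplacian tail head w).submatrix
        (Subtype.val : {v : V // v ≠ r} → V)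
        (Subtype.val : {v : V // v ≠ r} → V)).det
    = ∑ T : {p : {v : V // v ≠ r} → E //
        (∀ v, tail (p v) = v.1) ∧
        ∀ v : V, Relation.ReflTransGen
          (fun a b => ∃ h : a ≠ r, head (p ⟨a, h⟩) = b) v r},
      ∏ v : {v : V // v ≠ r}, w (T.1 v) :=
  stmt19_general tail head w hloop r
end
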